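/- arXiv:1907.09617 — 4 statements merged into one kernel-verified Lean document; each statement's English description precedes it below -/
import Mathlib

section
/- Let (X₁*, X₂*) be a pair of real random variables and let ε₁, ε₂ be i.i.d. N(0,τ²) random variables, τ > 0, with (ε₁,ε₂) independent of (X₁*,X₂*). Suppose the joint survival function x ↦ P(X₁* > x, X₂* > x) is (strictly positive and) regularly varying at infinity with index −α for some α > 0. Then P(X₁* + ε₁ > x, X₂* + ε₂ > x) / P(X₁* > x, X₂* > x) → 1 as x → ∞. (Joint-tail claim of Proposition 1, part 1, regularly varying case.) -/
/-!
Write `F` and `G` for the joint tails of `(X₁, X₂)` and of `(X₁ + ε₁, X₂ + ε₂)`. For `c < 1` a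
union bound gives `G x ≤ F (c x) + 2 P(ε > (1 - c) x)`, and for `c' > 1`, `M` and large `x`
independence gives `G x ≥ P(ε > -M)² F (x + M) ≥ P(ε > -M)² F (c' x)`. Regular variation turns
`F (c x) / F x` into `c ^ (-α)`; since `F` is monotone, a dyadic induction shows that it decays
at most polynomially, so the Gaussian tail, which is `O(e^{-t})` by the Chernoff bound, is
negligible against it. Letting `c, c' → 1` and `M → ∞` gives `G / F → 1`.
-/

open MeasureTheory ProbabilityTheory Filter Real

/-- `f` is regularly varying at infinity with index `ρ`:
for every `c > 0`, `f (c*x) / f x → c ^ ρ` as `x → ∞`. -/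
def RegularlyVarying (f : ℝ → ℝ) (ρ : ℝ) : Prop :=
  ∀ c : ℝ, 0 < c → Tendsto (fun x => f (c * x) / f x) atTop (nhds (c ^ ρ))

open Set Asymptotics Topology
open scoped NNReal

theorem Antitone.exists_mul_rpow_le_of_le_two_mul {F : ℝ → ℝ} (hF : Antitone F) {β x₀ : ℝ}
    (hβ : 0 ≤ β) (hx₀ : 0 < x₀) (hFx₀ : 0 < F x₀)
    (h : ∀ x ≥ x₀, 2 ^ (-β) * F x ≤ F (2 * x)) :
    ∃ C > 0, ∀ x ≥ x₀, C * x ^ (-β) ≤ F x := by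
  set C := 2 ^ (-β) * F x₀ * x₀ ^ β
  have hC : 0 < C := by positivity
  have hnear : ∀ x ≥ x₀, x ≤ 2 * x₀ → C * x ^ (-β) ≤ F x := fun x hx hx' =>
    calc C * x ^ (-β) ≤ C * x₀ ^ (-β) :=
          mul_le_mul_of_nonneg_left (rpow_le_rpow_of_nonpos hx₀ hx (neg_nonpos.2 hβ)) hC.le
      _ = 2 ^ (-β) * F x₀ := by
          rw [rpow_neg hx₀.le, mul_assoc, mul_inv_cancel₀ (by positivity), mul_one]
      _ ≤ F (2 * x₀) := h x₀ le_rfl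
      _ ≤ F x := hF hx'
  have hdyadic : ∀ n : ℕ, ∀ x ≥ x₀, x ≤ 2 ^ n * x₀ → C * x ^ (-β) ≤ F x := by
    intro n
    induction n with
    | zero => exact fun x hx hx' => hnear x hx (by linarith)
    | succ n ih =>
      intro x hx hx'
      rcases le_or_gt x (2 * x₀) with hx₂ | hx₂
      · exact hnear x hx hx₂
      calc C * x ^ (-β) = 2 ^ (-β) * (C * (x / 2) ^ (-β)) := by
            rw [mul_left_comm, ← mul_rpow zero_le_two (by linarith), mul_div_cancel₀ x two_ne_zero]
        _ ≤ 2 ^ (-β) * F (x / 2) := by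
            gcongr
            exact ih _ (by linarith) (by rw [pow_succ] at hx'; linarith)
        _ ≤ F (2 * (x / 2)) := h _ (by linarith)
        _ = F x := by rw [mul_div_cancel₀ x two_ne_zero]
  refine ⟨C, hC, fun x hx => ?_⟩
  obtain ⟨n, hn⟩ := pow_unbounded_of_one_lt (x / x₀) one_lt_two
  exact hdyadic n x hx ((div_lt_iff₀ hx₀).1 hn).le

theorem tendsto_rpow_const_nhds_one (ρ : ℝ) : Tendsto (fun c : ℝ => c ^ ρ) (𝓝 1) (𝓝 1) := by
  simpa using (continuousAt_rpow_const 1 ρ (Or.inl one_ne_zero)).tendsto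

theorem exists_rpow_lt_of_one_lt (ρ : ℝ) {b : ℝ} (hb : 1 < b) :
    ∃ c ∈ Ioo (0 : ℝ) 1, c ^ ρ < b :=
  (Eventually.and (Ioo_mem_nhdsLT zero_lt_one) (((tendsto_rpow_const_nhds_one ρ).mono_left
    nhdsWithin_le_nhds).eventually (eventually_lt_nhds hb))).exists

theorem exists_lt_rpow_of_lt_one (ρ : ℝ) {a : ℝ} (ha : a < 1) : ∃ c > 1, a < c ^ ρ :=
  (Eventually.and (self_mem_nhdsWithin (s := Ioi 1)) (((tendsto_rpow_const_nhds_one ρ).mono_left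
    nhdsWithin_le_nhds).eventually (eventually_gt_nhds ha))).exists

namespace RegularlyVarying

variable {F : ℝ → ℝ} {ρ : ℝ}

theorem isBigO_rpow (hRV : RegularlyVarying F ρ) (hF : ∀ x, 0 < F x) (hFa : Antitone F)
    {β : ℝ} (hβρ : β < ρ) (hβ : β ≤ 0) : (fun x => x ^ β) =O[atTop] F := by
  have hdouble : ∀ᶠ x in atTop, 2 ^ β * F x ≤ F (2 * x) := by
    filter_upwards [(hRV 2 two_pos).eventually
      (eventually_gt_nhds (rpow_lt_rpow_of_exponent_lt one_lt_two hβρ))] with x hx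
    exact ((lt_div_iff₀ (hF x)).1 hx).le
  obtain ⟨x₀, hx₀⟩ := (hdouble.and (eventually_gt_atTop 0)).exists_forall_of_atTop
  obtain ⟨C, hC, hCF⟩ := hFa.exists_mul_rpow_le_of_le_two_mul (β := -β) (neg_nonneg.2 hβ)
    (hx₀ x₀ le_rfl).2 (hF x₀) (by simpa using fun x hx => (hx₀ x hx).1)
  refine IsBigO.of_bound C⁻¹ ?_
  filter_upwards [eventually_ge_atTop x₀] with x hx
  have hx0 : 0 < x := (hx₀ x hx).2
  rw [norm_of_nonneg (rpow_pos_of_pos hx0 β).le, norm_of_nonneg (hF x).le, le_inv_mul_iff₀ hC]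
  simpa using hCF x hx

theorem isLittleO_exp_neg_mul (hRV : RegularlyVarying F ρ) (hF : ∀ x, 0 < F x)
    (hFa : Antitone F) {a : ℝ} (ha : 0 < a) : (fun x => exp (-a * x)) =o[atTop] F :=
  (isLittleO_exp_neg_mul_rpow_atTop ha _).trans_isBigO
    (hRV.isBigO_rpow hF hFa (β := min ρ 0 - 1) (by linarith [min_le_left ρ 0])
      (by linarith [min_le_right ρ 0]))

variable {G : ℝ → ℝ}

theorem eventually_div_lt (hRV : RegularlyVarying F ρ) (hF : ∀ x, 0 < F x) (hFa : Antitone F)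
    {K : ℝ} (hG : ∀ x s, G x ≤ F s + K * exp (-(x - s))) {b : ℝ} (hb : 1 < b) :
    ∀ᶠ x in atTop, G x / F x < b := by
  obtain ⟨c, ⟨hc0, hc1⟩, hcb⟩ := exists_rpow_lt_of_one_lt ρ hb
  have hbound : Tendsto (fun x => F (c * x) / F x + K * (exp (-(1 - c) * x) / F x)) atTop
      (𝓝 (c ^ ρ + K * 0)) :=
    (hRV c hc0).add
      (((hRV.isLittleO_exp_neg_mul hF hFa (sub_pos.2 hc1)).tendsto_div_nhds_zero).const_mul K)
  filter_upwards [hbound.eventually (eventually_lt_nhds (by simpa using hcb))] with x hx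
  calc G x / F x ≤ (F (c * x) + K * exp (-(x - c * x))) / F x :=
        div_le_div_of_nonneg_right (hG x (c * x)) (hF x).le
    _ = F (c * x) / F x + K * (exp (-(1 - c) * x) / F x) := by ring_nf
    _ < b := hx

theorem eventually_lt_div (hRV : RegularlyVarying F ρ) (hF : ∀ x, 0 < F x) (hFa : Antitone F)
    {p : ℝ → ℝ} (hp : Tendsto p atTop (𝓝 1)) (hp0 : ∀ M, 0 ≤ p M)
    (hG : ∀ x M, p M * F (x + M) ≤ G x) {a : ℝ} (ha : a < 1) :
    ∀ᶠ x in atTop, a < G x / F x := by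
  obtain ⟨c, hc1, hac⟩ := exists_lt_rpow_of_lt_one ρ ha
  obtain ⟨M, hM⟩ : ∃ M, a < p M * c ^ ρ :=
    ((hp.mul_const (c ^ ρ)).eventually (eventually_gt_nhds (by simpa using hac))).exists
  filter_upwards [((hRV c (by linarith)).const_mul (p M)).eventually (eventually_gt_nhds hM),
    (tendsto_id.const_mul_atTop (sub_pos.2 hc1)).eventually_ge_atTop M] with x hx hxM
  calc a < p M * (F (c * x) / F x) := hx
    _ ≤ p M * (F (x + M) / F x) := by
        gcongr
        · exact hp0 M
        · exact (hF x).le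
        · exact hFa (by simp only [id] at hxM; linarith)
    _ ≤ G x / F x := by
        rw [← mul_div_assoc]
        exact div_le_div_of_nonneg_right (hG x M) (hF x).le

end RegularlyVarying

theorem gaussianReal_real_Ioi_le (m : ℝ) (v : ℝ≥0) (t : ℝ) :
    (gaussianReal m v).real (Ioi t) ≤ exp (m + v / 2) * exp (-t) :=
  calc (gaussianReal m v).real (Ioi t) ≤ (gaussianReal m v).real {x | t ≤ id x} :=
        measureReal_mono fun _ hx => le_of_lt (mem_Ioi.1 hx)
    _ ≤ exp (-1 * t) * mgf id (gaussianReal m v) 1 :=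
        measure_ge_le_exp_mul_mgf t zero_le_one (by simpa using integrable_exp_mul_gaussianReal 1)
    _ = exp (m + v / 2) * exp (-t) := by rw [mgf_id_gaussianReal]; ring_nf

section

variable {Ω : Type*} [MeasurableSpace Ω] {μ : Measure Ω}

theorem measureReal_lt_le_of_map_eq_gaussianReal {ε : Ω → ℝ} (hε : Measurable ε) {m : ℝ}
    {v : ℝ≥0} (hlaw : μ.map ε = gaussianReal m v) (t : ℝ) :
    μ.real {ω | t < ε ω} ≤ exp (m + v / 2) * exp (-t) := by
  have h := gaussianReal_real_Ioi_le m v t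
  rwa [← hlaw, map_measureReal_apply hε measurableSet_Ioi] at h

theorem tendsto_measureReal_neg_lt_atTop [IsProbabilityMeasure μ] (X : Ω → ℝ) :
    Tendsto (fun M => μ.real {ω | -M < X ω}) atTop (𝓝 1) := by
  have hmono : Monotone fun M : ℝ => {ω | -M < X ω} := fun M N hMN ω hω => by
    simp only [mem_ofPred_eq] at hω ⊢; linarith
  have hunion : ⋃ M : ℝ, {ω | -M < X ω} = univ :=
    eq_univ_of_forall fun ω => mem_iUnion.2 ⟨1 - X ω, by simp⟩
  have h := tendsto_measure_iUnion_atTop (μ := μ) hmono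
  rw [hunion, measure_univ] at h
  exact (ENNReal.tendsto_toReal ENNReal.one_ne_top).comp h

theorem measureReal_add_lt_le [IsFiniteMeasure μ] (X₁ X₂ ε₁ ε₂ : Ω → ℝ) (x s : ℝ) :
    μ.real {ω | x < X₁ ω + ε₁ ω ∧ x < X₂ ω + ε₂ ω} ≤
      μ.real {ω | s < X₁ ω ∧ s < X₂ ω} +
        (μ.real {ω | x - s < ε₁ ω} + μ.real {ω | x - s < ε₂ ω}) := by
  refine (measureReal_mono fun ω (hω : x < X₁ ω + ε₁ ω ∧ x < X₂ ω + ε₂ ω) => ?_).trans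
    ((measureReal_union_le _ _).trans (add_le_add_right (measureReal_union_le _ _) _))
  by_cases hε₁ : x - s < ε₁ ω
  · exact Or.inr (Or.inl hε₁)
  by_cases hε₂ : x - s < ε₂ ω
  · exact Or.inr (Or.inr hε₂)
  exact Or.inl ⟨by linarith [not_lt.1 hε₁], by linarith [not_lt.1 hε₂]⟩

theorem measureReal_mul_le_measureReal_add_lt [IsFiniteMeasure μ] {X₁ X₂ ε₁ ε₂ : Ω → ℝ}
    (hε : IndepFun ε₁ ε₂ μ)
    (hεX : IndepFun (fun ω => (ε₁ ω, ε₂ ω)) (fun ω => (X₁ ω, X₂ ω)) μ) (x M : ℝ) :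
    μ.real {ω | -M < ε₁ ω} * μ.real {ω | -M < ε₂ ω} *
        μ.real {ω | x + M < X₁ ω ∧ x + M < X₂ ω} ≤
      μ.real {ω | x < X₁ ω + ε₁ ω ∧ x < X₂ ω + ε₂ ω} := by
  have hnoise : μ {ω | -M < ε₁ ω ∧ -M < ε₂ ω} = μ {ω | -M < ε₁ ω} * μ {ω | -M < ε₂ ω} :=
    hε.measure_inter_preimage_eq_mul _ _ measurableSet_Ioi measurableSet_Ioi
  have hjoint : μ ({ω | -M < ε₁ ω ∧ -M < ε₂ ω} ∩ {ω | x + M < X₁ ω ∧ x + M < X₂ ω}) =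
      μ {ω | -M < ε₁ ω ∧ -M < ε₂ ω} * μ {ω | x + M < X₁ ω ∧ x + M < X₂ ω} :=
    hεX.measure_inter_preimage_eq_mul _ _ (measurableSet_Ioi.prod measurableSet_Ioi)
      (measurableSet_Ioi.prod measurableSet_Ioi)
  calc _ = μ.real ({ω | -M < ε₁ ω ∧ -M < ε₂ ω} ∩ {ω | x + M < X₁ ω ∧ x + M < X₂ ω}) := by
        simp only [measureReal_def, hjoint, hnoise, ENNReal.toReal_mul]
    _ ≤ _ := measureReal_mono fun ω ⟨⟨h₁, h₂⟩, h₃, h₄⟩ =>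
        show x < X₁ ω + ε₁ ω ∧ x < X₂ ω + ε₂ ω from ⟨by linarith, by linarith⟩

end

theorem stmt0_general
    {Ω : Type*} [MeasurableSpace Ω] (μ : Measure Ω) [IsProbabilityMeasure μ]
    (X₁ X₂ ε₁ ε₂ : Ω → ℝ)
    (hε₁ : Measurable ε₁) (hε₂ : Measurable ε₂)
    (τ : ℝ)
    (hlaw₁ : μ.map ε₁ = gaussianReal 0 ⟨τ ^ 2, sq_nonneg τ⟩)
    (hlaw₂ : μ.map ε₂ = gaussianReal 0 ⟨τ ^ 2, sq_nonneg τ⟩)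
    (hεindep : IndepFun ε₁ ε₂ μ)
    (hindep : IndepFun (fun ω => (ε₁ ω, ε₂ ω)) (fun ω => (X₁ ω, X₂ ω)) μ)
    (α : ℝ)
    (hpos : ∀ x : ℝ, 0 < (μ {ω | X₁ ω > x ∧ X₂ ω > x}).toReal)
    (hRV : RegularlyVarying (fun x => (μ {ω | X₁ ω > x ∧ X₂ ω > x}).toReal) (-α)) :
    Tendsto (fun x =>
        (μ {ω | X₁ ω + ε₁ ω > x ∧ X₂ ω + ε₂ ω > x}).toReal /
          (μ {ω | X₁ ω > x ∧ X₂ ω > x}).toReal) atTop (nhds 1) := by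
  have hanti : Antitone fun x => μ.real {ω | x < X₁ ω ∧ x < X₂ ω} := fun x y hxy =>
    measureReal_mono fun ω ⟨h₁, h₂⟩ => show x < X₁ ω ∧ x < X₂ ω from
      ⟨hxy.trans_lt h₁, hxy.trans_lt h₂⟩
  have hupper (x s : ℝ) : μ.real {ω | x < X₁ ω + ε₁ ω ∧ x < X₂ ω + ε₂ ω} ≤
      μ.real {ω | s < X₁ ω ∧ s < X₂ ω} + 2 * exp (τ ^ 2 / 2) * exp (-(x - s)) := by
    have h₁ : μ.real {ω | x - s < ε₁ ω} ≤ exp (0 + τ ^ 2 / 2) * exp (-(x - s)) :=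
      measureReal_lt_le_of_map_eq_gaussianReal hε₁ hlaw₁ (x - s)
    have h₂ : μ.real {ω | x - s < ε₂ ω} ≤ exp (0 + τ ^ 2 / 2) * exp (-(x - s)) :=
      measureReal_lt_le_of_map_eq_gaussianReal hε₂ hlaw₂ (x - s)
    rw [zero_add] at h₁ h₂
    linarith [measureReal_add_lt_le (μ := μ) X₁ X₂ ε₁ ε₂ x s]
  refine tendsto_order.2 ⟨fun a ha => ?_, fun b hb => hRV.eventually_div_lt hpos hanti hupper hb⟩
  have hnoise_gt : Tendsto (fun M => μ.real {ω | -M < ε₁ ω} * μ.real {ω | -M < ε₂ ω}) atTop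
      (𝓝 1) := by
    simpa using (tendsto_measureReal_neg_lt_atTop ε₁).mul (tendsto_measureReal_neg_lt_atTop ε₂)
  exact hRV.eventually_lt_div hpos hanti hnoise_gt
    (fun M => mul_nonneg measureReal_nonneg measureReal_nonneg)
    (measureReal_mul_le_measureReal_add_lt hεindep hindep) ha

/-- Joint-tail claim of Proposition 1, part 1, regularly varying case. -/
theorem stmt0
    {Ω : Type*} [MeasurableSpace Ω] (μ : Measure Ω) [IsProbabilityMeasure μ]
    (X₁ X₂ ε₁ ε₂ : Ω → ℝ)
    (hX₁ : Measurable X₁) (hX₂ : Measurable X₂)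
    (hε₁ : Measurable ε₁) (hε₂ : Measurable ε₂)
    (τ : ℝ) (hτ : 0 < τ)
    (hlaw₁ : μ.map ε₁ = gaussianReal 0 ⟨τ ^ 2, sq_nonneg τ⟩)
    (hlaw₂ : μ.map ε₂ = gaussianReal 0 ⟨τ ^ 2, sq_nonneg τ⟩)
    (hεindep : IndepFun ε₁ ε₂ μ)
    (hindep : IndepFun (fun ω => (ε₁ ω, ε₂ ω)) (fun ω => (X₁ ω, X₂ ω)) μ)
    (α : ℝ) (hα : 0 < α)
    (hpos : ∀ x : ℝ, 0 < (μ {ω | X₁ ω > x ∧ X₂ ω > x}).toReal)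
    (hRV : RegularlyVarying (fun x => (μ {ω | X₁ ω > x ∧ X₂ ω > x}).toReal) (-α)) :
    Tendsto (fun x =>
        (μ {ω | X₁ ω + ε₁ ω > x ∧ X₂ ω + ε₂ ω > x}).toReal /
          (μ {ω | X₁ ω > x ∧ X₂ ω > x}).toReal) atTop (nhds 1) :=
  stmt0_general μ X₁ X₂ ε₁ ε₂ hε₁ hε₂ τ hlaw₁ hlaw₂ hεindep hindep α hpos hRV
end

section
/- Let (X₁*, X₂*) be a pair of real random variables whose joint survival function satisfies P(X₁* > x, X₂* > x) ~ w(x)·exp(−θ_J x) as x → ∞, where θ_J > 0 and w : (0,∞) → (0,∞) is regularly varying at infinity with some index. Let ε₁, ε₂ be i.i.d. N(0,τ²) random variables, τ > 0, independent of (X₁*,X₂*). Then, writing r(x) = P(X₁* + ε₁ > x, X₂* + ε₂ > x) / P(X₁* > x, X₂* > x), one has E[e^{θ_J min(ε₁,ε₂)}] ≤ liminf_{x→∞} r(x) ≤ limsup_{x→∞} r(x) ≤ E[e^{θ_J max(ε₁,ε₂)}]. -/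
open MeasureTheory ProbabilityTheory Filter Real
open scoped NNReal ENNReal

lemma my_integrable_exp_mul_gaussianReal (b m : ℝ) (v : ℝ≥0) (hv : v ≠ 0) :
    Integrable (fun x => Real.exp (b * x)) (gaussianReal m v) := by
  rw [gaussianReal_of_var_ne_zero m hv]
  rw [integrable_withDensity_iff (measurable_gaussianPDF _ _)
    (ae_of_all _ fun x => ENNReal.ofReal_lt_top)]
  have hv' : (0:ℝ) < (v:ℝ) := by positivity
  have : (fun x => Real.exp (b * x) * (gaussianPDF m v x).toReal)
      = fun x => Real.exp (b * m + b ^ 2 * v / 2) * gaussianPDFReal (m + b * v) v x := by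
    funext x
    rw [gaussianPDF, ENNReal.toReal_ofReal (gaussianPDFReal_nonneg _ _ _)]
    simp only [gaussianPDFReal]
    rw [mul_comm (Real.exp (b * x)), mul_assoc, mul_comm (Real.exp (b*m + b^2*(v:ℝ)/2)), mul_assoc,
      ← Real.exp_add, mul_assoc, ← Real.exp_add]
    congr 2
    field_simp
    ring
  rw [this]
  exact (integrable_gaussianPDFReal _ _).const_mul _


lemma my_shift_small (K : ℝ → ℝ) (hK : Measurable K)
    (hlim : ∀ s : ℝ, Tendsto (fun u => K (u + s) - K u) atTop (nhds 0)) :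
    ∀ ε : ℝ, 0 < ε → ∃ Δ : ℝ, 0 < Δ ∧ ∃ U : ℝ, ∀ u, U ≤ u → ∀ δ : ℝ, |δ| ≤ Δ →
      |K (u + δ) - K u| ≤ ε := by
  intro ε hε
  by_contra hcon
  push_neg at hcon
  -- build sequences u n, δ n
  have hsel : ∀ n : ℕ, ∃ u, (n:ℝ) ≤ u ∧ ∃ δ : ℝ, |δ| ≤ 1/(n+1) ∧ ε < |K (u + δ) - K u| := by
    intro n
    obtain ⟨u, hu, δ, hδ, hgt⟩ := hcon (1/(n+1)) (by positivity) n
    exact ⟨u, hu, δ, hδ, hgt⟩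
  choose u hun δ hδn hgt using hsel
  have hu_top : Tendsto u atTop atTop :=
    tendsto_atTop_mono hun tendsto_natCast_atTop_atTop
  have hδ0 : Tendsto δ atTop (nhds 0) := by
    have h1 : Tendsto (fun n : ℕ => 1/((n:ℝ)+1)) atTop (nhds 0) :=
      tendsto_one_div_add_atTop_nhds_zero_nat
    have h2 : Tendsto (fun n : ℕ => -(1/((n:ℝ)+1))) atTop (nhds 0) := by
      simpa using h1.neg
    refine tendsto_of_tendsto_of_tendsto_of_le_of_le h2 h1 ?_ ?_
    · intro n; exact neg_le_of_abs_le (hδn n)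
    · intro n; exact le_of_abs_le (hδn n)
  have huδ_top : Tendsto (fun n => u n + δ n) atTop atTop := by
    have hbase : Tendsto (fun n : ℕ => (n:ℝ) + (-1)) atTop atTop :=
      tendsto_atTop_add_const_right _ (-1) tendsto_natCast_atTop_atTop
    refine tendsto_atTop_mono ?_ hbase
    intro n
    have h1 : |δ n| ≤ 1 := (hδn n).trans (by
      rw [div_le_one (by positivity)]; linarith [Nat.cast_nonneg (α := ℝ) n])
    have := neg_le_of_abs_le h1
    have := hun n
    linarith
  -- Egorov setup
  set f : ℕ → ℝ → ℝ := fun n s => K (u n + s) - K (u n) with hf_def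
  set g : ℕ → ℝ → ℝ := fun n s => K (u n + δ n + s) - K (u n + δ n) with hg_def
  have hfm : ∀ n, StronglyMeasurable (f n) := fun n =>
    ((hK.comp (measurable_const.add measurable_id)).sub measurable_const).stronglyMeasurable
  have hgm : ∀ n, StronglyMeasurable (g n) := fun n =>
    ((hK.comp (measurable_const.add measurable_id)).sub measurable_const).stronglyMeasurable
  have hIcc : (volume : Measure ℝ) (Set.Icc (0:ℝ) 1) ≠ ⊤ := by
    simp [Real.volume_Icc]
  have hfg : ∀ᵐ s ∂(volume : Measure ℝ), s ∈ Set.Icc (0:ℝ) 1 →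
      Tendsto (fun n => f n s) atTop (nhds ((fun _ => (0:ℝ)) s)) :=
    ae_of_all _ (fun s _ => (hlim s).comp hu_top)
  have hgg : ∀ᵐ s ∂(volume : Measure ℝ), s ∈ Set.Icc (0:ℝ) 1 →
      Tendsto (fun n => g n s) atTop (nhds ((fun _ => (0:ℝ)) s)) :=
    ae_of_all _ (fun s _ => (hlim s).comp huδ_top)
  obtain ⟨tA, htAsub, htAm, htAμ, htAunif⟩ :=
    tendstoUniformlyOn_of_ae_tendsto hfm stronglyMeasurable_const measurableSet_Icc hIcc hfg
      (show (0:ℝ) < 1/8 by norm_num)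
  obtain ⟨tB, htBsub, htBm, htBμ, htBunif⟩ :=
    tendstoUniformlyOn_of_ae_tendsto hgm stronglyMeasurable_const measurableSet_Icc hIcc hgg
      (show (0:ℝ) < 1/8 by norm_num)
  have hA' := (Metric.tendstoUniformlyOn_iff.mp htAunif) (ε/3) (by positivity)
  have hB' := (Metric.tendstoUniformlyOn_iff.mp htBunif) (ε/3) (by positivity)
  have hsmall : ∀ᶠ n : ℕ in atTop, |δ n| ≤ 1/8 := by
    filter_upwards [eventually_ge_atTop 8] with n hn
    refine (hδn n).trans ?_
    rw [div_le_div_iff₀ (by positivity) (by norm_num)]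
    have : (8:ℝ) ≤ (n:ℝ) := by exact_mod_cast hn
    linarith
  obtain ⟨n, hAn, hBn, hδsmall⟩ := (hA'.and (hB'.and hsmall)).exists
  set A : Set ℝ := Set.Icc 0 1 \ tA with hA_def
  set B : Set ℝ := Set.Icc 0 1 \ tB with hB_def
  set C : Set ℝ := (fun s => s + (-δ n)) ⁻¹' B with hC_def
  have hCm : MeasurableSet C := (measurableSet_Icc.diff htBm).preimage (measurable_add_const _)
  have hAm : MeasurableSet A := measurableSet_Icc.diff htAm
  -- A ∩ C is nonempty
  have hACne : (A ∩ C).Nonempty := by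
    rw [Set.nonempty_iff_ne_empty]
    intro hAC
    have hdisj : Disjoint A C := Set.disjoint_iff_inter_eq_empty.mpr hAC
    have cover1 : Set.Icc (0:ℝ) 1 ⊆ A ∪ tA := fun s hs => by
      by_cases h : s ∈ tA
      · exact Or.inr h
      · exact Or.inl ⟨hs, h⟩
    have cover2 : Set.Icc (δ n) (1 + δ n) ⊆ C ∪ ((fun s => s + (-δ n)) ⁻¹' tB) := by
      intro s hs
      have hs' : s + (-δ n) ∈ Set.Icc (0:ℝ) 1 := by
        constructor
        · linarith [hs.1]
        · linarith [hs.2]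
      by_cases h : s + (-δ n) ∈ tB
      · exact Or.inr h
      · exact Or.inl ⟨hs', h⟩
    have hvol2 : (volume : Measure ℝ) ((fun s => s + (-δ n)) ⁻¹' tB) = volume tB :=
      measure_preimage_add_right _ _ _
    have hsub : A ∪ C ⊆ Set.Icc (-(1/8) : ℝ) (9/8) := by
      rintro s (hs | hs)
      · have hs' := hs.1
        have h1 := neg_le_of_abs_le hδsmall
        have h2 := le_of_abs_le hδsmall
        exact ⟨by linarith [hs'.1], by linarith [hs'.2]⟩
      · have hs' : s + (-δ n) ∈ Set.Icc (0:ℝ) 1 := hs.1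
        have h1 := neg_le_of_abs_le hδsmall
        have h2 := le_of_abs_le hδsmall
        exact ⟨by linarith [hs'.1], by linarith [hs'.2]⟩
    have key : (volume : Measure ℝ) (Set.Icc (0:ℝ) 1) + volume (Set.Icc (δ n) (1 + δ n))
        ≤ ENNReal.ofReal (10/8) + (ENNReal.ofReal (1/8) + ENNReal.ofReal (1/8)) := by
      calc (volume : Measure ℝ) (Set.Icc (0:ℝ) 1) + volume (Set.Icc (δ n) (1 + δ n))
          ≤ volume (A ∪ tA) + volume (C ∪ ((fun s => s + (-δ n)) ⁻¹' tB)) :=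
            add_le_add (measure_mono cover1) (measure_mono cover2)
        _ ≤ (volume A + volume tA) + (volume C + volume ((fun s => s + (-δ n)) ⁻¹' tB)) :=
            add_le_add (measure_union_le _ _) (measure_union_le _ _)
        _ = (volume A + volume C) + (volume tA + volume tB) := by rw [hvol2]; ring
        _ = volume (A ∪ C) + (volume tA + volume tB) := by
            rw [measure_union hdisj hCm]
        _ ≤ ENNReal.ofReal (10/8) + (ENNReal.ofReal (1/8) + ENNReal.ofReal (1/8)) := by
            refine add_le_add ?_ (add_le_add htAμ htBμ)
            refine (measure_mono hsub).trans ?_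
            rw [Real.volume_Icc]
            exact ENNReal.ofReal_le_ofReal (by norm_num)
    rw [Real.volume_Icc, Real.volume_Icc] at key
    have h18 : (1:ℝ) + δ n - δ n = 1 := by ring
    rw [h18] at key
    rw [← ENNReal.ofReal_add (by norm_num) (by norm_num),
      ← ENNReal.ofReal_add (by norm_num) (by norm_num),
      ← ENNReal.ofReal_add (by norm_num) (by norm_num)] at key
    rw [ENNReal.ofReal_le_ofReal_iff (by norm_num)] at key
    norm_num at key
  obtain ⟨s₀, hs₀A, hs₀C⟩ := hACne
  have hfs : dist ((0:ℝ)) (f n s₀) < ε/3 := by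
    have := hAn s₀ hs₀A
    simpa using this
  have hgs : dist ((0:ℝ)) (g n (s₀ + (-δ n))) < ε/3 := hBn _ hs₀C
  rw [dist_comm, Real.dist_eq, sub_zero] at hfs hgs
  have hgval : g n (s₀ + (-δ n)) = K (u n + s₀) - K (u n + δ n) := by
    have harg : u n + δ n + (s₀ + (-δ n)) = u n + s₀ := by ring
    simp only [hg_def]
    rw [harg]
  have hfval : f n s₀ = K (u n + s₀) - K (u n) := rfl
  have hK1 : |K (u n + s₀) - K (u n)| < ε/3 := by rw [← hfval]; exact hfs
  have hK2 : |K (u n + s₀) - K (u n + δ n)| < ε/3 := by rw [← hgval]; exact hgs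
  have : |K (u n + δ n) - K (u n)| < ε := by
    have h3 : K (u n + δ n) - K (u n)
        = (K (u n + s₀) - K (u n)) - (K (u n + s₀) - K (u n + δ n)) := by ring
    rw [h3]
    calc |(K (u n + s₀) - K (u n)) - (K (u n + s₀) - K (u n + δ n))|
        ≤ |K (u n + s₀) - K (u n)| + |K (u n + s₀) - K (u n + δ n)| := abs_sub _ _
      _ < ε/3 + ε/3 := by linarith
      _ < ε := by linarith
  exact absurd (hgt n) (not_lt.mpr this.le)

lemma my_sup_small (K : ℝ → ℝ) (hK : Measurable K)
    (hlim : ∀ s : ℝ, Tendsto (fun u => K (u + s) - K u) atTop (nhds 0)) :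
    ∀ ε : ℝ, 0 < ε → ∃ U : ℝ, ∀ u, U ≤ u → ∀ s : ℝ, 0 ≤ s → s ≤ 1 →
      |K (u + s) - K u| ≤ ε := by
  intro ε hε
  obtain ⟨Δ, hΔ, U₁, hU₁⟩ := my_shift_small K hK hlim (ε/2) (by positivity)
  set m : ℕ := ⌈1/Δ⌉₊ with hm_def
  have hm1 : 1 ≤ m := Nat.one_le_iff_ne_zero.mpr (by
    simp only [hm_def, ne_eq, Nat.ceil_eq_zero, not_le]
    positivity)
  have hmpos : (0:ℝ) < m := by exact_mod_cast hm1
  have hinvm : 1/(m:ℝ) ≤ Δ := by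
    rw [div_le_iff₀ hmpos, mul_comm]
    rw [← div_le_iff₀ hΔ]
    exact Nat.le_ceil _
  -- pointwise smallness at the grid points
  have hgrid : ∀ᶠ u in (atTop : Filter ℝ), ∀ i ∈ Finset.range (m+1),
      |K (u + (i:ℝ)/m) - K u| ≤ ε/2 := by
    rw [eventually_all_finset]
    intro i _
    have h := hlim ((i:ℝ)/m)
    have := (NormedAddCommGroup.tendsto_nhds_zero.mp h) (ε/2) (by positivity)
    filter_upwards [this] with u hu
    rw [Real.norm_eq_abs] at hu
    exact hu.le
  obtain ⟨U₂, hU₂⟩ := eventually_atTop.mp hgrid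
  refine ⟨max U₁ U₂, fun u hu s hs0 hs1 => ?_⟩
  have huU₁ : U₁ ≤ u := le_trans (le_max_left _ _) hu
  have huU₂ : U₂ ≤ u := le_trans (le_max_right _ _) hu
  set i : ℕ := ⌊s * m⌋₊ with hi_def
  have him : i ≤ m := by
    have : s * m ≤ (m:ℝ) := by nlinarith
    calc i ≤ ⌊(m:ℝ)⌋₊ := Nat.floor_le_floor this
      _ = m := Nat.floor_natCast m
  have hile : (i:ℝ)/m ≤ s := by
    rw [div_le_iff₀ hmpos]
    exact Nat.floor_le (by positivity)
  have hilt : s - (i:ℝ)/m ≤ Δ := by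
    have := Nat.lt_floor_add_one (s * m)
    have h2 : s < ((i:ℝ)+1)/m := by
      rw [lt_div_iff₀ hmpos]
      exact_mod_cast this
    have : s - (i:ℝ)/m < 1/m := by
      have := sub_lt_sub_right h2 ((i:ℝ)/m)
      calc s - (i:ℝ)/m < ((i:ℝ)+1)/m - (i:ℝ)/m := this
        _ = 1/m := by ring
    linarith [hinvm]
  have h1 : |K ((u + (i:ℝ)/m) + (s - (i:ℝ)/m)) - K (u + (i:ℝ)/m)| ≤ ε/2 := by
    refine hU₁ (u + (i:ℝ)/m) ?_ _ ?_
    · have : (0:ℝ) ≤ (i:ℝ)/m := by positivity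
      linarith
    · rw [abs_of_nonneg (by linarith)]
      exact hilt
  have h2 : |K (u + (i:ℝ)/m) - K u| ≤ ε/2 := hU₂ u huU₂ i (Finset.mem_range.mpr (by omega))
  have harg : (u + (i:ℝ)/m) + (s - (i:ℝ)/m) = u + s := by ring
  rw [harg] at h1
  calc |K (u + s) - K u| = |(K (u + s) - K (u + (i:ℝ)/m)) + (K (u + (i:ℝ)/m) - K u)| := by
        ring_nf
    _ ≤ |K (u + s) - K (u + (i:ℝ)/m)| + |K (u + (i:ℝ)/m) - K u| := abs_add_le _ _
    _ ≤ ε/2 + ε/2 := add_le_add h1 h2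
    _ = ε := by ring

lemma my_potter (K : ℝ → ℝ) (hK : Measurable K)
    (hlim : ∀ s : ℝ, Tendsto (fun u => K (u + s) - K u) atTop (nhds 0)) :
    ∃ U : ℝ, ∀ u, U ≤ u → ∀ s : ℝ, 0 ≤ s → |K (u + s) - K u| ≤ s + 1 := by
  obtain ⟨U, hU⟩ := my_sup_small K hK hlim (1/2) (by norm_num)
  refine ⟨U, fun u hu s hs => ?_⟩
  -- by induction on ⌊s⌋
  suffices h : ∀ n : ℕ, ∀ s : ℝ, (n:ℝ) ≤ s → s ≤ (n:ℝ)+1 → |K (u + s) - K u| ≤ ((n:ℝ)+1)/2 by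
    set n : ℕ := ⌊s⌋₊ with hn_def
    have h1 : (n:ℝ) ≤ s := Nat.floor_le hs
    have h2 : s ≤ (n:ℝ)+1 := (Nat.lt_floor_add_one s).le
    have := h n s h1 h2
    have hns : ((n:ℝ)+1)/2 ≤ s + 1 := by linarith
    linarith
  intro n
  induction n with
  | zero => intro s h1 h2
            have := hU u hu s (by exact_mod_cast h1) (by exact_mod_cast (by simpa using h2))
            linarith
  | succ k ih =>
    intro s h1 h2
    push_cast at h1 h2
    have hs1 : (k:ℝ) ≤ s - 1 := by linarith
    have hs2 : s - 1 ≤ (k:ℝ) + 1 := by linarith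
    have hstep : |K ((u + (s-1)) + 1) - K (u + (s-1))| ≤ 1/2 := by
      refine hU (u + (s-1)) ?_ 1 (by norm_num) (by norm_num)
      have : (0:ℝ) ≤ s - 1 := by linarith
      linarith
    have harg : (u + (s-1)) + 1 = u + s := by ring
    rw [harg] at hstep
    have hih := ih (s-1) hs1 hs2
    calc |K (u + s) - K u|
        = |(K (u + s) - K (u + (s-1))) + (K (u + (s-1)) - K u)| := by ring_nf
      _ ≤ |K (u + s) - K (u + (s-1))| + |K (u + (s-1)) - K u| := abs_add_le _ _
      _ ≤ 1/2 + ((k:ℝ)+1)/2 := add_le_add hstep hih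
      _ ≤ ((((k:ℕ):ℝ)+1)+1)/2 := by linarith
      _ = (((k+1:ℕ):ℝ)+1)/2 := by push_cast; ring

section Ratio
variable (S : ℝ → ℝ) (θ ρ : ℝ) (K : ℝ → ℝ)

lemma my_logS (hSpos : ∀ y, 0 < S y)
    (hKdef : ∀ u, K u = Real.log (S (Real.exp u)) + θ * Real.exp u - ρ * u) :
    ∀ y : ℝ, 0 < y → Real.log (S y) = K (Real.log y) - θ * y + ρ * Real.log y := by
  intro y hy
  have := hKdef (Real.log y)
  rw [Real.exp_log hy] at this
  linarith [this]

lemma my_ratio_tendsto (hSpos : ∀ y, 0 < S y)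
    (hKdef : ∀ u, K u = Real.log (S (Real.exp u)) + θ * Real.exp u - ρ * u)
    (hK : Measurable K)
    (hlim : ∀ s : ℝ, Tendsto (fun u => K (u + s) - K u) atTop (nhds 0)) (t : ℝ) :
    Tendsto (fun x => S (x - t) / S x) atTop (nhds (Real.exp (θ * t))) := by
  have hlogS := my_logS S θ ρ K hSpos hKdef
  -- log (x - t) - log x → 0
  have hld : Tendsto (fun x : ℝ => Real.log (x - t) - Real.log x) atTop (nhds 0) := by
    have h0 : Tendsto (fun x : ℝ => t / x) atTop (nhds 0) :=
      tendsto_const_nhds.div_atTop tendsto_id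
    have h1 : Tendsto (fun x : ℝ => 1 - t / x) atTop (nhds 1) := by
      simpa using tendsto_const_nhds.sub h0
    have h2 : Tendsto (fun x : ℝ => Real.log (1 - t / x)) atTop (nhds 0) := by
      have := (Real.continuousAt_log one_ne_zero).tendsto.comp h1
      simpa [Function.comp_def] using this
    refine h2.congr' ?_
    filter_upwards [eventually_gt_atTop (max 0 t)] with x hx
    have hx0 : 0 < x := lt_of_le_of_lt (le_max_left _ _) hx
    have hxt : 0 < x - t := by
      have := lt_of_le_of_lt (le_max_right _ _) hx
      linarith
    rw [show (1 : ℝ) - t / x = (x - t) / x by field_simp]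
    rw [Real.log_div hxt.ne' hx0.ne']
  -- K (log (x-t)) - K (log x) → 0
  have hKd : Tendsto (fun x : ℝ => K (Real.log (x - t)) - K (Real.log x)) atTop (nhds 0) := by
    rw [NormedAddCommGroup.tendsto_nhds_zero]
    intro ε hε
    obtain ⟨Δ, hΔ, U, hU⟩ := my_shift_small K hK hlim (ε/2) (by positivity)
    have hev1 : ∀ᶠ x : ℝ in atTop, ‖Real.log (x - t) - Real.log x‖ < Δ :=
      (NormedAddCommGroup.tendsto_nhds_zero.mp hld) Δ hΔ
    filter_upwards [hev1, eventually_ge_atTop (Real.exp U), eventually_gt_atTop (max 0 t)]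
      with x h1 h2 h3
    have hx0 : 0 < x := lt_of_le_of_lt (le_max_left _ _) h3
    have hlogx : U ≤ Real.log x := by
      rw [← Real.log_exp U]
      exact Real.log_le_log (Real.exp_pos U) h2
    set d : ℝ := Real.log (x - t) - Real.log x with hd_def
    have harg : Real.log x + d = Real.log (x - t) := by rw [hd_def]; ring
    have := hU (Real.log x) hlogx d (by rw [← Real.norm_eq_abs]; exact h1.le)
    rw [harg] at this
    rw [Real.norm_eq_abs]
    calc |K (Real.log (x - t)) - K (Real.log x)| ≤ ε/2 := this
      _ < ε := by linarith
  -- assemble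
  have hD : Tendsto (fun x : ℝ => θ * t + ((K (Real.log (x - t)) - K (Real.log x))
      + ρ * (Real.log (x - t) - Real.log x))) atTop (nhds (θ * t)) := by
    have : Tendsto (fun x : ℝ => (K (Real.log (x - t)) - K (Real.log x))
        + ρ * (Real.log (x - t) - Real.log x)) atTop (nhds 0) := by
      simpa using hKd.add (hld.const_mul ρ)
    simpa using tendsto_const_nhds.add this
  have hexp : Tendsto (fun x : ℝ => Real.exp (θ * t + ((K (Real.log (x - t)) - K (Real.log x))
      + ρ * (Real.log (x - t) - Real.log x)))) atTop (nhds (Real.exp (θ * t))) :=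
    (Real.continuous_exp.tendsto _).comp hD
  refine hexp.congr' ?_
  filter_upwards [eventually_gt_atTop (max 0 t)] with x hx
  have hx0 : 0 < x := lt_of_le_of_lt (le_max_left _ _) hx
  have hxt : 0 < x - t := by
    have := lt_of_le_of_lt (le_max_right _ _) hx
    linarith
  rw [eq_comm, ← Real.exp_log (hSpos (x - t)), ← Real.exp_log (hSpos x), ← Real.exp_sub]
  congr 1
  rw [hlogS (x - t) hxt, hlogS x hx0]
  ring

end Ratio

lemma my_domination (S : ℝ → ℝ) (hSanti : Antitone S) (hSpos : ∀ y, 0 < S y)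
    (hS1 : ∀ y, S y ≤ 1) (θ ρ : ℝ) (hθ : 0 < θ) (K : ℝ → ℝ)
    (hKdef : ∀ u, K u = Real.log (S (Real.exp u)) + θ * Real.exp u - ρ * u)
    (hK : Measurable K)
    (hlim : ∀ s : ℝ, Tendsto (fun u => K (u + s) - K u) atTop (nhds 0)) :
    ∃ C : ℝ, 1 ≤ C ∧ ∃ β : ℝ, 0 < β ∧ ∃ X₀ : ℝ, 1 ≤ X₀ ∧ ∀ x, X₀ ≤ x → ∀ t : ℝ,
      S (x - t) / S x ≤ C * Real.exp (β * |t|) := by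
  have hlogS := my_logS S θ ρ K hSpos hKdef
  obtain ⟨U₀, hU₀⟩ := my_potter K hK hlim
  obtain ⟨U, hU_def⟩ : ∃ U : ℝ, U = max U₀ 0 := ⟨_, rfl⟩
  have hU0 : 0 ≤ U := hU_def ▸ le_max_right _ _
  have hpot : ∀ u, U ≤ u → ∀ s : ℝ, 0 ≤ s → |K (u + s) - K u| ≤ s + 1 :=
    fun u hu => hU₀ u (le_trans (le_max_left _ _) (hU_def ▸ hu))
  obtain ⟨X₁, hX₁_def⟩ : ∃ X₁ : ℝ, X₁ = Real.exp U := ⟨_, rfl⟩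
  have hX₁pos : 0 < X₁ := hX₁_def ▸ Real.exp_pos U
  have hX₁1 : 1 ≤ X₁ := hX₁_def ▸ Real.one_le_exp hU0
  obtain ⟨β, hβ_def⟩ : ∃ β : ℝ, β = θ + (1 + |ρ|) * (1/X₁ + 1) + 1 := ⟨_, rfl⟩
  have hβpos : 0 < β := by
    have h1 : 0 ≤ (1 + |ρ|) * (1/X₁ + 1) := by positivity
    rw [hβ_def]; linarith
  obtain ⟨D, hD_def⟩ : ∃ D : ℝ, D = |K U| + |U| + 1 + (1 + θ + |ρ|) * X₁ + 1 := ⟨_, rfl⟩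
  have hD1 : 1 ≤ D := by
    have h1 : 0 ≤ |K U| := abs_nonneg _
    have h2 : 0 ≤ |U| := abs_nonneg _
    have h3 : 0 ≤ (1 + θ + |ρ|) * X₁ := by positivity
    rw [hD_def]; linarith
  refine ⟨Real.exp D, Real.one_le_exp (by linarith), β, hβpos, X₁ + 1, by linarith, ?_⟩
  intro x hx t
  have hx1 : 1 ≤ x := by linarith
  have hx0 : 0 < x := by linarith
  have hlogx0 : 0 ≤ Real.log x := Real.log_nonneg hx1
  have hlogxU : U ≤ Real.log x := by
    rw [← Real.log_exp U]
    exact Real.log_le_log (Real.exp_pos _) (by linarith)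
  have hexp1 : (1:ℝ) ≤ Real.exp (β * |t|) := Real.one_le_exp (by positivity)
  rcases le_or_gt t 0 with ht | ht
  · -- t ≤ 0 : ratio ≤ 1
    have h1 : S (x - t) ≤ S x := hSanti (by linarith)
    have h2 : S (x - t) / S x ≤ 1 := by
      rw [div_le_one (hSpos x)]; exact h1
    have h3 : (1:ℝ) ≤ Real.exp D := Real.one_le_exp (by linarith)
    nlinarith
  · rcases le_or_gt X₁ (x - t) with hcase | hcase
    · -- main case : x - t ≥ X₁
      have hxt0 : 0 < x - t := by linarith
      obtain ⟨u, hu_def⟩ : ∃ u : ℝ, u = Real.log (x - t) := ⟨_, rfl⟩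
      obtain ⟨s, hs_def⟩ : ∃ s : ℝ, s = Real.log x - Real.log (x - t) := ⟨_, rfl⟩
      have hs0 : 0 ≤ s := by
        have : Real.log (x - t) ≤ Real.log x := Real.log_le_log hxt0 (by linarith)
        rw [hs_def]; linarith
      have huU : U ≤ u := by
        rw [hu_def, hX₁_def] at *
        rw [← Real.log_exp U]
        exact Real.log_le_log (Real.exp_pos _) hcase
      have harg : u + s = Real.log x := by rw [hu_def, hs_def]; ring
      have hpot1 : |K (u + s) - K u| ≤ s + 1 := hpot u huU s hs0
      rw [harg] at hpot1
      have hsbound : s ≤ t / X₁ := by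
        have hlog1 : Real.log x - Real.log (x - t) = Real.log (x / (x - t)) := by
          rw [Real.log_div hx0.ne' hxt0.ne']
        have hlog2 : Real.log (x / (x - t)) ≤ x / (x - t) - 1 :=
          Real.log_le_sub_one_of_pos (by positivity)
        have hlog3 : x / (x - t) - 1 = t / (x - t) := by field_simp; ring
        have hlog4 : t / (x - t) ≤ t / X₁ :=
          div_le_div_of_nonneg_left ht.le hX₁pos hcase
        rw [hs_def]
        linarith
      -- log ratio bound
      have hlr : Real.log (S (x - t)) - Real.log (S x) ≤ β * t + 1 := by
        rw [hlogS (x - t) hxt0, hlogS x hx0]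
        have h1 : K u - K (Real.log x) ≤ s + 1 := by
          have := abs_le.mp hpot1
          linarith [this.1]
        have h2 : ρ * (u - Real.log x) ≤ |ρ| * s := by
          have hh : ρ * (u - Real.log x) = -(ρ * s) := by rw [hs_def, hu_def]; ring
          rw [hh]
          calc -(ρ * s) ≤ |ρ * s| := neg_le_abs _
            _ = |ρ| * s := by rw [abs_mul, abs_of_nonneg hs0]
        have key : K u - K (Real.log x) + ρ * (u - Real.log x) ≤ (1 + |ρ|) * s + 1 := by
          have hring : (1 + |ρ|) * s = s + |ρ| * s := by ring
          linarith
        have hs2 : (1 + |ρ|) * s ≤ (1 + |ρ|) * (1/X₁) * t := by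
          have h3 : s ≤ (1/X₁) * t := by
            rw [one_div, inv_mul_eq_div]
            exact hsbound
          have := mul_le_mul_of_nonneg_left h3 (by positivity : (0:ℝ) ≤ 1 + |ρ|)
          linarith [this]
        have hβt : (1 + |ρ|) * (1/X₁) * t + θ * t + 1 ≤ β * t + 1 := by
          have hexpand : β * t = θ * t + (1 + |ρ|) * (1/X₁) * t + ((1 + |ρ|) + 1) * t := by
            rw [hβ_def]; ring
          have hpos2 : 0 ≤ ((1 + |ρ|) + 1) * t := by positivity
          linarith
        rw [hu_def, hs_def] at key
        rw [hs_def] at hs2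
        linarith
      have hratio : S (x - t) / S x = Real.exp (Real.log (S (x - t)) - Real.log (S x)) := by
        rw [Real.exp_sub, Real.exp_log (hSpos _), Real.exp_log (hSpos _)]
      rw [hratio, ← Real.exp_add]
      refine Real.exp_le_exp.mpr ?_
      rw [abs_of_pos ht]
      linarith
    · -- boundary case : x - t < X₁, i.e. x < t + X₁
      have hxlt : x < t + X₁ := by linarith
      have h1 : S (x - t) / S x ≤ 1 / S x :=
        (div_le_div_iff_of_pos_right (hSpos x)).mpr (hS1 _)
      have h2 : (1:ℝ) / S x = Real.exp (-(Real.log (S x))) := by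
        rw [Real.exp_neg, Real.exp_log (hSpos x), one_div]
      have hs' : 0 ≤ Real.log x - U := by linarith
      have hpot2 : |K (U + (Real.log x - U)) - K U| ≤ (Real.log x - U) + 1 :=
        hpot U le_rfl _ hs'
      have harg2 : U + (Real.log x - U) = Real.log x := by ring
      rw [harg2] at hpot2
      have hKbound : -(K (Real.log x)) ≤ |K U| + |U| + 1 + Real.log x := by
        have := abs_le.mp hpot2
        have h5 : K U - ((Real.log x - U) + 1) ≤ K (Real.log x) := by linarith [this.1]
        have h6 : -(K U) ≤ |K U| := neg_le_abs _
        have h7 : -U ≤ |U| := neg_le_abs _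
        linarith
      have hlogxx : Real.log x ≤ x := (Real.log_le_sub_one_of_pos hx0).trans (by linarith)
      have hbound : -(Real.log (S x)) ≤ D + β * t := by
        rw [hlogS x hx0]
        have h8 : -ρ * Real.log x ≤ |ρ| * Real.log x := by
          have h8a : -ρ ≤ |ρ| := neg_le_abs _
          have := mul_le_mul_of_nonneg_right h8a hlogx0
          linarith
        have p1 : |ρ| * Real.log x ≤ |ρ| * x := mul_le_mul_of_nonneg_left hlogxx (abs_nonneg ρ)
        have hβge : 1 + θ + |ρ| ≤ β := by
          rw [hβ_def]
          have hq0 : 0 ≤ (1 + |ρ|) * (1/X₁) := by positivity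
          have hq1 : (1 + |ρ|) * (1/X₁ + 1) = (1 + |ρ|) * (1/X₁) + (1 + |ρ|) := by ring
          linarith
        have p2 : (1 + θ + |ρ|) * x ≤ (1 + θ + |ρ|) * (t + X₁) :=
          mul_le_mul_of_nonneg_left hxlt.le (by positivity)
        have e1 : (1 + θ + |ρ|) * x = x + θ * x + |ρ| * x := by ring
        have e2 : (1 + θ + |ρ|) * (t + X₁) = (1 + θ + |ρ|) * t + (1 + θ + |ρ|) * X₁ := by ring
        have p3 : (1 + θ + |ρ|) * t ≤ β * t := mul_le_mul_of_nonneg_right hβge ht.le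
        rw [hD_def]
        have hxx : x ≤ t + X₁ := hxlt.le
        linarith [hKbound, h8, p1, p2, e1, e2, p3, hlogxx, hxx]
      calc S (x - t) / S x ≤ 1 / S x := h1
        _ = Real.exp (-(Real.log (S x))) := h2
        _ ≤ Real.exp (D + β * t) := Real.exp_le_exp.mpr hbound
        _ = Real.exp D * Real.exp (β * t) := Real.exp_add _ _
        _ ≤ Real.exp D * Real.exp (β * |t|) := by
            refine mul_le_mul_of_nonneg_left ?_ (Real.exp_pos _).le
            exact Real.exp_le_exp.mpr (mul_le_mul_of_nonneg_left (le_abs_self t) hβpos.le)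


/-- Joint-tail bounds of Proposition 1, part 2: if the joint survival function of
`(X₁*, X₂*)` satisfies `P(X₁* > x, X₂* > x) ~ w(x) exp(-θ_J x)` with `w` regularly varying,
and `ε₁, ε₂` are i.i.d. `N(0, τ²)` independent of `(X₁*, X₂*)`, then the ratio
`r(x) = P(X₁* + ε₁ > x, X₂* + ε₂ > x) / P(X₁* > x, X₂* > x)` satisfies
`E[e^{θ_J min(ε₁,ε₂)}] ≤ liminf r ≤ limsup r ≤ E[e^{θ_J max(ε₁,ε₂)}]`. -/
theorem stmt4
    {Ω : Type*} [MeasurableSpace Ω] (μ : Measure Ω) [IsProbabilityMeasure μ]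
    (X₁ X₂ ε₁ ε₂ : Ω → ℝ)
    (hX₁ : Measurable X₁) (hX₂ : Measurable X₂)
    (hε₁ : Measurable ε₁) (hε₂ : Measurable ε₂)
    (τ : ℝ) (hτ : 0 < τ)
    (hlaw₁ : μ.map ε₁ = gaussianReal 0 ⟨τ ^ 2, sq_nonneg τ⟩)
    (hlaw₂ : μ.map ε₂ = gaussianReal 0 ⟨τ ^ 2, sq_nonneg τ⟩)
    (hεindep : IndepFun ε₁ ε₂ μ)
    (hindep : IndepFun (fun ω => (ε₁ ω, ε₂ ω)) (fun ω => (X₁ ω, X₂ ω)) μ)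
    (θJ : ℝ) (hθJ : 0 < θJ)
    (w : ℝ → ℝ) (ρ : ℝ) (hw : ∀ x : ℝ, 0 < x → 0 < w x) (hwRV : RegularlyVarying w ρ)
    (hpos : ∀ x : ℝ, 0 < (μ {ω | X₁ ω > x ∧ X₂ ω > x}).toReal)
    (hequiv : Tendsto (fun x =>
        (μ {ω | X₁ ω > x ∧ X₂ ω > x}).toReal / (w x * Real.exp (-θJ * x)))
      atTop (nhds 1)) :
    (∫ ω, Real.exp (θJ * min (ε₁ ω) (ε₂ ω)) ∂μ) ≤
        Filter.liminf (fun x =>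
          (μ {ω | X₁ ω + ε₁ ω > x ∧ X₂ ω + ε₂ ω > x}).toReal /
            (μ {ω | X₁ ω > x ∧ X₂ ω > x}).toReal) atTop ∧
      Filter.liminf (fun x =>
          (μ {ω | X₁ ω + ε₁ ω > x ∧ X₂ ω + ε₂ ω > x}).toReal /
            (μ {ω | X₁ ω > x ∧ X₂ ω > x}).toReal) atTop ≤
        Filter.limsup (fun x =>
          (μ {ω | X₁ ω + ε₁ ω > x ∧ X₂ ω + ε₂ ω > x}).toReal /
            (μ {ω | X₁ ω > x ∧ X₂ ω > x}).toReal) atTop ∧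
      Filter.limsup (fun x =>
          (μ {ω | X₁ ω + ε₁ ω > x ∧ X₂ ω + ε₂ ω > x}).toReal /
            (μ {ω | X₁ ω > x ∧ X₂ ω > x}).toReal) atTop ≤
        ∫ ω, Real.exp (θJ * max (ε₁ ω) (ε₂ ω)) ∂μ := by
  classical
  -- Notation
  have hpairε : Measurable fun ω => (ε₁ ω, ε₂ ω) := hε₁.prodMk hε₂
  have hpairX : Measurable fun ω => (X₁ ω, X₂ ω) := hX₁.prodMk hX₂
  set ν : Measure (ℝ × ℝ) := μ.map (fun ω => (ε₁ ω, ε₂ ω)) with hν_def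
  haveI hνprob : IsProbabilityMeasure ν := Measure.isProbabilityMeasure_map hpairε.aemeasurable
  set S : ℝ → ℝ := fun y => (μ {ω | X₁ ω > y ∧ X₂ ω > y}).toReal with hS_def
  have hGfin : ∀ y : ℝ, μ {ω | X₁ ω > y ∧ X₂ ω > y} ≠ ⊤ := fun y => measure_ne_top μ _
  have hG_mono : Antitone (fun y : ℝ => μ {ω | X₁ ω > y ∧ X₂ ω > y}) := by
    intro a b hab
    refine measure_mono (fun ω h => ?_)
    exact ⟨lt_of_le_of_lt hab h.1, lt_of_le_of_lt hab h.2⟩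
  have hSanti : Antitone S := fun a b hab => ENNReal.toReal_mono (hGfin a) (hG_mono hab)
  have hSpos : ∀ y, 0 < S y := hpos
  have hS1 : ∀ y, S y ≤ 1 := by
    intro y
    have h1 : μ {ω | X₁ ω > y ∧ X₂ ω > y} ≤ 1 := prob_le_one
    calc S y ≤ (1 : ℝ≥0∞).toReal := ENNReal.toReal_mono ENNReal.one_ne_top h1
      _ = 1 := by simp
  have hSmeas : Measurable S := hSanti.measurable
  have hGofReal : ∀ y : ℝ, μ {ω | X₁ ω > y ∧ X₂ ω > y} = ENNReal.ofReal (S y) :=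
    fun y => (ENNReal.ofReal_toReal (hGfin y)).symm
  -- h is regularly varying
  set h : ℝ → ℝ := fun x => S x * Real.exp (θJ * x) with hh_def
  have hhpos : ∀ x, 0 < h x := fun x => mul_pos (hSpos x) (Real.exp_pos _)
  have hhw : Tendsto (fun x => h x / w x) atTop (nhds 1) := by
    refine hequiv.congr' ?_
    filter_upwards [eventually_gt_atTop (0:ℝ)] with x hx
    have hwx := (hw x hx).ne'
    have hex := (Real.exp_pos (θJ * x)).ne'
    rw [hh_def]
    rw [show -θJ * x = -(θJ * x) by ring, Real.exp_neg]
    field_simp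
    rfl
  have hwh : Tendsto (fun x => w x / h x) atTop (nhds 1) := by
    have := (hhw.inv₀ one_ne_zero)
    rw [inv_one] at this
    refine this.congr' ?_
    filter_upwards [eventually_gt_atTop (0:ℝ)] with x hx
    rw [inv_div]
  have hRVh : ∀ c : ℝ, 0 < c → Tendsto (fun x => h (c * x) / h x) atTop (nhds (c ^ ρ)) := by
    intro c hc
    have hcx : Tendsto (fun x : ℝ => c * x) atTop atTop := tendsto_id.const_mul_atTop hc
    have h1 : Tendsto (fun x => h (c * x) / w (c * x)) atTop (nhds 1) := hhw.comp hcx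
    have h2 := (h1.mul (hwRV c hc)).mul hwh
    rw [one_mul, mul_one] at h2
    refine h2.congr' ?_
    filter_upwards [eventually_gt_atTop (0:ℝ)] with x hx
    have hcx0 : 0 < c * x := mul_pos hc hx
    have hwcx := (hw _ hcx0).ne'
    have hwx := (hw x hx).ne'
    have hhx := (hhpos x).ne'
    field_simp
  -- the function K
  set K : ℝ → ℝ := fun u => Real.log (S (Real.exp u)) + θJ * Real.exp u - ρ * u with hK_def
  have hKdef : ∀ u, K u = Real.log (S (Real.exp u)) + θJ * Real.exp u - ρ * u := fun _ => rfl
  have hKmeas : Measurable K := by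
    refine (((hSmeas.comp measurable_exp).log).add ((measurable_exp).const_mul θJ)).sub
      (measurable_id.const_mul ρ)
  have hKh : ∀ u, K u = Real.log (h (Real.exp u)) - ρ * u := by
    intro u
    rw [hK_def, hh_def]
    simp only []
    rw [Real.log_mul (hSpos _).ne' (Real.exp_ne_zero _), Real.log_exp]
  have hlimK : ∀ s : ℝ, Tendsto (fun u => K (u + s) - K u) atTop (nhds 0) := by
    intro s
    have hcpos : (0:ℝ) < Real.exp s := Real.exp_pos s
    have hrpowpos : (0:ℝ) < (Real.exp s) ^ ρ := Real.rpow_pos_of_pos hcpos ρ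
    have hlog : Tendsto (fun x => Real.log (h (Real.exp s * x) / h x)) atTop
        (nhds (Real.log ((Real.exp s) ^ ρ))) :=
      ((Real.continuousAt_log hrpowpos.ne').tendsto).comp (hRVh _ hcpos)
    have hcomp : Tendsto (fun u : ℝ => Real.log (h (Real.exp s * Real.exp u) / h (Real.exp u)))
        atTop (nhds (Real.log ((Real.exp s) ^ ρ))) := hlog.comp Real.tendsto_exp_atTop
    have hval : Real.log ((Real.exp s) ^ ρ) = ρ * s := by
      rw [Real.log_rpow hcpos, Real.log_exp]
    have hfinal := hcomp.sub_const (ρ * s)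
    rw [hval, sub_self] at hfinal
    refine hfinal.congr ?_
    intro u
    rw [hKh (u + s), hKh u]
    rw [Real.exp_add, mul_comm (Real.exp u) (Real.exp s)]
    rw [Real.log_div (hhpos _).ne' (hhpos _).ne']
    ring
  -- ratio limit and domination
  have hrt : ∀ t : ℝ, Tendsto (fun x => S (x - t) / S x) atTop (nhds (Real.exp (θJ * t))) :=
    my_ratio_tendsto S θJ ρ K hSpos hKdef hKmeas hlimK
  obtain ⟨C, hC1, β, hβpos, X₀, hX₀1, hdom⟩ :=
    my_domination S hSanti hSpos hS1 θJ ρ hθJ K hKdef hKmeas hlimK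
  -- measure representation of the numerator
  set κ : Measure (ℝ × ℝ) := μ.map (fun ω => (X₁ ω, X₂ ω)) with hκ_def
  have hmap4 : μ.map (fun ω => ((ε₁ ω, ε₂ ω), (X₁ ω, X₂ ω))) = ν.prod κ :=
    (indepFun_iff_map_prod_eq_prod_map_map hpairε.aemeasurable hpairX.aemeasurable).mp hindep
  have hTmeas : ∀ x : ℝ,
      MeasurableSet {p : (ℝ × ℝ) × (ℝ × ℝ) | x < p.2.1 + p.1.1 ∧ x < p.2.2 + p.1.2} := by
    intro x
    refine MeasurableSet.inter ?_ ?_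
    · exact measurableSet_lt measurable_const
        ((measurable_fst.comp measurable_snd).add (measurable_fst.comp measurable_fst))
    · exact measurableSet_lt measurable_const
        ((measurable_snd.comp measurable_snd).add (measurable_snd.comp measurable_fst))
  have hrep : ∀ x : ℝ, μ {ω | X₁ ω + ε₁ ω > x ∧ X₂ ω + ε₂ ω > x}
      = ∫⁻ e, κ {q : ℝ × ℝ | x < q.1 + e.1 ∧ x < q.2 + e.2} ∂ν := by
    intro x
    have hpre : {ω | X₁ ω + ε₁ ω > x ∧ X₂ ω + ε₂ ω > x}
        = (fun ω => ((ε₁ ω, ε₂ ω), (X₁ ω, X₂ ω))) ⁻¹'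
          {p : (ℝ × ℝ) × (ℝ × ℝ) | x < p.2.1 + p.1.1 ∧ x < p.2.2 + p.1.2} := rfl
    rw [hpre, ← Measure.map_apply (hpairε.prodMk hpairX) (hTmeas x), hmap4,
      Measure.prod_apply (hTmeas x)]
    rfl
  have hκset : ∀ a : ℝ, κ {q : ℝ × ℝ | a < q.1 ∧ a < q.2} = ENNReal.ofReal (S a) := by
    intro a
    have ms : MeasurableSet {q : ℝ × ℝ | a < q.1 ∧ a < q.2} :=
      (measurableSet_lt measurable_const measurable_fst).inter
        (measurableSet_lt measurable_const measurable_snd)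
    rw [hκ_def, Measure.map_apply hpairX ms]
    exact hGofReal a
  have hub : ∀ x : ℝ, μ {ω | X₁ ω + ε₁ ω > x ∧ X₂ ω + ε₂ ω > x}
      ≤ ∫⁻ e, ENNReal.ofReal (S (x - max e.1 e.2)) ∂ν := by
    intro x
    rw [hrep x]
    refine lintegral_mono (fun e => ?_)
    rw [← hκset (x - max e.1 e.2)]
    refine measure_mono (fun q hq => ?_)
    exact ⟨by linarith [hq.1, le_max_left e.1 e.2], by linarith [hq.2, le_max_right e.1 e.2]⟩
  have hlb : ∀ x : ℝ, ∫⁻ e, ENNReal.ofReal (S (x - min e.1 e.2)) ∂ν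
      ≤ μ {ω | X₁ ω + ε₁ ω > x ∧ X₂ ω + ε₂ ω > x} := by
    intro x
    rw [hrep x]
    refine lintegral_mono (fun e => ?_)
    rw [← hκset (x - min e.1 e.2)]
    refine measure_mono (fun q hq => ?_)
    exact ⟨by linarith [hq.1, min_le_left e.1 e.2], by linarith [hq.2, min_le_right e.1 e.2]⟩
  -- measurability and finiteness of the comparison integrals
  have hmeasmax : ∀ x : ℝ, Measurable (fun e : ℝ × ℝ => S (x - max e.1 e.2)) :=
    fun x => hSmeas.comp (measurable_const.sub (measurable_fst.max measurable_snd))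
  have hmeasmin : ∀ x : ℝ, Measurable (fun e : ℝ × ℝ => S (x - min e.1 e.2)) :=
    fun x => hSmeas.comp (measurable_const.sub (measurable_fst.min measurable_snd))
  have hNfin : ∀ x : ℝ, μ {ω | X₁ ω + ε₁ ω > x ∧ X₂ ω + ε₂ ω > x} ≠ ⊤ :=
    fun x => measure_ne_top μ _
  have hUfin : ∀ x : ℝ, ∫⁻ e, ENNReal.ofReal (S (x - max e.1 e.2)) ∂ν ≠ ⊤ := by
    intro x
    refine ne_of_lt (lt_of_le_of_lt ?_ (by norm_num : (1:ℝ≥0∞) < ⊤))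
    calc ∫⁻ e, ENNReal.ofReal (S (x - max e.1 e.2)) ∂ν
        ≤ ∫⁻ _, 1 ∂ν := lintegral_mono (fun e => ENNReal.ofReal_le_one.mpr (hS1 _))
      _ = 1 := by simp
  have htoRealmax : ∀ x : ℝ, (∫⁻ e, ENNReal.ofReal (S (x - max e.1 e.2)) ∂ν).toReal
      = ∫ e, S (x - max e.1 e.2) ∂ν := fun x =>
    (integral_eq_lintegral_of_nonneg_ae (ae_of_all _ fun e => (hSpos _).le)
      (hmeasmax x).aestronglyMeasurable).symm
  have htoRealmin : ∀ x : ℝ, (∫⁻ e, ENNReal.ofReal (S (x - min e.1 e.2)) ∂ν).toReal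
      = ∫ e, S (x - min e.1 e.2) ∂ν := fun x =>
    (integral_eq_lintegral_of_nonneg_ae (ae_of_all _ fun e => (hSpos _).le)
      (hmeasmin x).aestronglyMeasurable).symm
  -- bounds on the ratio r
  have hr_ub : ∀ x : ℝ, (μ {ω | X₁ ω + ε₁ ω > x ∧ X₂ ω + ε₂ ω > x}).toReal / S x
      ≤ ∫ e, S (x - max e.1 e.2) / S x ∂ν := by
    intro x
    rw [integral_div]
    refine (div_le_div_iff_of_pos_right (hSpos x)).mpr ?_
    rw [← htoRealmax x]
    exact ENNReal.toReal_mono (hUfin x) (hub x)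
  have hr_lb : ∀ x : ℝ, ∫ e, S (x - min e.1 e.2) / S x ∂ν
      ≤ (μ {ω | X₁ ω + ε₁ ω > x ∧ X₂ ω + ε₂ ω > x}).toReal / S x := by
    intro x
    rw [integral_div]
    refine (div_le_div_iff_of_pos_right (hSpos x)).mpr ?_
    rw [← htoRealmin x]
    exact ENNReal.toReal_mono (hNfin x) (hlb x)
  -- Gaussian integrability
  have hvne : (⟨τ ^ 2, sq_nonneg τ⟩ : ℝ≥0) ≠ 0 := by
    intro hcon
    have : τ ^ 2 = 0 := congrArg NNReal.toReal hcon
    exact (pow_pos hτ 2).ne' this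
  have hexpint : ∀ c : ℝ, ∀ f : Ω → ℝ, Measurable f →
      μ.map f = gaussianReal 0 ⟨τ ^ 2, sq_nonneg τ⟩ →
      Integrable (fun ω => Real.exp (c * f ω)) μ := by
    intro c f hf hlaw
    have h1 := my_integrable_exp_mul_gaussianReal c 0 _ hvne
    rw [← hlaw] at h1
    have := (integrable_map_measure (by
      exact (measurable_exp.comp (measurable_id.const_mul c)).aestronglyMeasurable)
      hf.aemeasurable).mp h1
    simpa [Function.comp_def] using this
  have habsint : ∀ c : ℝ, ∀ f : Ω → ℝ, Measurable f →
      μ.map f = gaussianReal 0 ⟨τ ^ 2, sq_nonneg τ⟩ →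
      Integrable (fun ω => Real.exp (c * |f ω|)) μ := by
    intro c f hf hlaw
    have h1 := hexpint c f hf hlaw
    have h2 := hexpint (-c) f hf hlaw
    refine (h1.add h2).mono' ?_ ?_
    · exact (measurable_exp.comp (hf.abs.const_mul c)).aestronglyMeasurable
    · refine ae_of_all _ (fun ω => ?_)
      rw [Real.norm_eq_abs, abs_of_pos (Real.exp_pos _)]
      show Real.exp (c * |f ω|) ≤ Real.exp (c * f ω) + Real.exp (-c * f ω)
      rcases abs_cases (f ω) with ⟨heq, _⟩ | ⟨heq, _⟩
      · rw [heq]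
        have := (Real.exp_pos (-c * f ω)).le
        linarith
      · rw [heq]
        have h3 : c * -f ω = -c * f ω := by ring
        rw [h3]
        have := (Real.exp_pos (c * f ω)).le
        linarith
  -- integrable bounds on ν
  have hprodint : ∀ c : ℝ, Integrable (fun e : ℝ × ℝ =>
      Real.exp (c * |e.1|) * Real.exp (c * |e.2|)) ν := by
    intro c
    have hφ : Measurable fun t : ℝ => Real.exp (c * |t|) :=
      measurable_exp.comp (measurable_id.abs.const_mul c)
    have hind : IndepFun (fun ω => Real.exp (c * |ε₁ ω|)) (fun ω => Real.exp (c * |ε₂ ω|)) μ :=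
      hεindep.comp hφ hφ
    have hmul := hind.integrable_mul (habsint c ε₁ hε₁ hlaw₁) (habsint c ε₂ hε₂ hlaw₂)
    rw [hν_def]
    refine (integrable_map_measure ?_ hpairε.aemeasurable).mpr ?_
    · exact ((hφ.comp measurable_fst).mul (hφ.comp measurable_snd)).aestronglyMeasurable
    · exact hmul
  -- limits of the comparison integrals
  set Amax : ℝ := ∫ e : ℝ × ℝ, Real.exp (θJ * max e.1 e.2) ∂ν with hAmax_def
  set Amin : ℝ := ∫ e : ℝ × ℝ, Real.exp (θJ * min e.1 e.2) ∂ν with hAmin_def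
  have hmaxcont : Continuous fun e : ℝ × ℝ => Real.exp (θJ * max e.1 e.2) :=
    Real.continuous_exp.comp (continuous_const.mul (continuous_fst.max continuous_snd))
  have hmincont : Continuous fun e : ℝ × ℝ => Real.exp (θJ * min e.1 e.2) :=
    Real.continuous_exp.comp (continuous_const.mul (continuous_fst.min continuous_snd))
  have hAmax_eq : ∫ ω, Real.exp (θJ * max (ε₁ ω) (ε₂ ω)) ∂μ = Amax := by
    rw [hAmax_def, hν_def, integral_map hpairε.aemeasurable hmaxcont.aestronglyMeasurable]
  have hAmin_eq : ∫ ω, Real.exp (θJ * min (ε₁ ω) (ε₂ ω)) ∂μ = Amin := by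
    rw [hAmin_def, hν_def, integral_map hpairε.aemeasurable hmincont.aestronglyMeasurable]
  have habsmax : ∀ e : ℝ × ℝ, |max e.1 e.2| ≤ |e.1| + |e.2| := by
    intro e
    rcases max_cases e.1 e.2 with ⟨heq, _⟩ | ⟨heq, _⟩ <;> rw [heq]
    · linarith [abs_nonneg e.2]
    · linarith [abs_nonneg e.1]
  have hg_int : Integrable (fun e : ℝ × ℝ =>
      C * (Real.exp (β * |e.1|) * Real.exp (β * |e.2|))) ν := (hprodint β).const_mul C
  have hFmeas : ∀ x : ℝ, AEStronglyMeasurable (fun e : ℝ × ℝ => S (x - max e.1 e.2) / S x) ν :=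
    fun x => ((hmeasmax x).div_const _).aestronglyMeasurable
  have hFbound : ∀ᶠ x in (atTop : Filter ℝ), ∀ᵐ e ∂ν, ‖S (x - max e.1 e.2) / S x‖
      ≤ C * (Real.exp (β * |e.1|) * Real.exp (β * |e.2|)) := by
    filter_upwards [eventually_ge_atTop X₀] with x hx
    refine ae_of_all _ (fun e => ?_)
    rw [Real.norm_eq_abs, abs_of_nonneg (div_nonneg (hSpos _).le (hSpos _).le)]
    calc S (x - max e.1 e.2) / S x ≤ C * Real.exp (β * |max e.1 e.2|) := hdom x hx _
      _ ≤ C * (Real.exp (β * |e.1|) * Real.exp (β * |e.2|)) := by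
          rw [← Real.exp_add]
          refine mul_le_mul_of_nonneg_left (Real.exp_le_exp.mpr ?_) (by linarith)
          calc β * |max e.1 e.2| ≤ β * (|e.1| + |e.2|) :=
                mul_le_mul_of_nonneg_left (habsmax e) hβpos.le
            _ = β * |e.1| + β * |e.2| := by ring
  have hUten : Tendsto (fun x => ∫ e, S (x - max e.1 e.2) / S x ∂ν) atTop (nhds Amax) := by
    rw [hAmax_def]
    exact tendsto_integral_filter_of_dominated_convergence _
      (Eventually.of_forall hFmeas) hFbound hg_int (ae_of_all _ (fun e => hrt (max e.1 e.2)))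
  have hr_nonneg : ∀ x : ℝ,
      0 ≤ (μ {ω | X₁ ω + ε₁ ω > x ∧ X₂ ω + ε₂ ω > x}).toReal / S x :=
    fun x => div_nonneg ENNReal.toReal_nonneg (hSpos x).le
  have hkey_ub : ∀ b : ℝ, Amax < b → ∀ᶠ x in (atTop : Filter ℝ),
      (μ {ω | X₁ ω + ε₁ ω > x ∧ X₂ ω + ε₂ ω > x}).toReal / S x ≤ b := by
    intro b hb
    filter_upwards [hUten.eventually_le_const hb, eventually_ge_atTop X₀] with x h1 h2
    exact (hr_ub x).trans h1
  -- lower bound via Fatou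
  have hmin_int : Integrable (fun e : ℝ × ℝ => Real.exp (θJ * min e.1 e.2)) ν := by
    refine (hprodint θJ).mono' hmincont.aestronglyMeasurable (ae_of_all _ (fun e => ?_))
    rw [Real.norm_eq_abs, abs_of_pos (Real.exp_pos _), ← Real.exp_add]
    refine Real.exp_le_exp.mpr ?_
    have h1 : min e.1 e.2 ≤ |e.1| := (min_le_left _ _).trans (le_abs_self _)
    calc θJ * min e.1 e.2 ≤ θJ * (|e.1| + |e.2|) :=
          mul_le_mul_of_nonneg_left (by linarith [abs_nonneg e.2]) hθJ.le
      _ = θJ * |e.1| + θJ * |e.2| := by ring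
  have hAmin_lint : ENNReal.ofReal Amin
      = ∫⁻ e, ENNReal.ofReal (Real.exp (θJ * min e.1 e.2)) ∂ν := by
    rw [hAmin_def]
    exact ofReal_integral_eq_lintegral_ofReal hmin_int (ae_of_all _ fun e => (Real.exp_pos _).le)
  have hkey_lb : ∀ b : ℝ, b < Amin → ∀ᶠ x in (atTop : Filter ℝ),
      b ≤ (μ {ω | X₁ ω + ε₁ ω > x ∧ X₂ ω + ε₂ ω > x}).toReal / S x := by
    intro b hb
    rcases le_or_gt b 0 with hb0 | hb0
    · exact Eventually.of_forall (fun x => hb0.trans (hr_nonneg x))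
    by_contra hcon
    rw [not_eventually] at hcon
    have hfreq : ∀ a : ℝ, ∃ x, a ≤ x ∧
        (μ {ω | X₁ ω + ε₁ ω > x ∧ X₂ ω + ε₂ ω > x}).toReal / S x < b := by
      intro a
      obtain ⟨x, hx1, hx2⟩ :=
        frequently_atTop.mp (hcon.mono (fun x hx => lt_of_not_ge hx)) a
      exact ⟨x, hx1, hx2⟩
    choose xs hxs1 hxs2 using fun n : ℕ => hfreq n
    have hxs_top : Tendsto xs atTop atTop := tendsto_atTop_mono hxs1 tendsto_natCast_atTop_atTop
    have hRn_meas : ∀ n : ℕ, Measurable (fun e : ℝ × ℝ =>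
        ENNReal.ofReal (S (xs n - min e.1 e.2) / S (xs n))) :=
      fun n => ((hmeasmin (xs n)).div_const _).ennreal_ofReal
    have hfatou := lintegral_liminf_le (μ := ν) (u := atTop) hRn_meas
    have hptwise : ∀ e : ℝ × ℝ, ENNReal.ofReal (Real.exp (θJ * min e.1 e.2))
        = liminf (fun n => ENNReal.ofReal (S (xs n - min e.1 e.2) / S (xs n))) atTop := by
      intro e
      have ht := (hrt (min e.1 e.2)).comp hxs_top
      have ht2 := (ENNReal.continuous_ofReal.tendsto _).comp ht
      exact ht2.liminf_eq.symm
    have hstep1 : ∫⁻ e, ENNReal.ofReal (Real.exp (θJ * min e.1 e.2)) ∂ν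
        ≤ liminf (fun n => ∫⁻ e, ENNReal.ofReal (S (xs n - min e.1 e.2) / S (xs n)) ∂ν) atTop :=
      le_trans (le_of_eq (lintegral_congr (fun e => hptwise e))) hfatou
    have hterm : ∀ n : ℕ, ∫⁻ e, ENNReal.ofReal (S (xs n - min e.1 e.2) / S (xs n)) ∂ν
        ≤ ENNReal.ofReal b := by
      intro n
      have hint : Integrable (fun e : ℝ × ℝ => S (xs n - min e.1 e.2) / S (xs n)) ν := by
        refine (integrable_const (1 / S (xs n))).mono'
          ((hmeasmin (xs n)).div_const _).aestronglyMeasurable (ae_of_all _ fun e => ?_)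
        rw [Real.norm_eq_abs, abs_of_nonneg (div_nonneg (hSpos _).le (hSpos _).le)]
        exact (div_le_div_iff_of_pos_right (hSpos _)).mpr (hS1 _)
      have heq1 : ∫⁻ e, ENNReal.ofReal (S (xs n - min e.1 e.2) / S (xs n)) ∂ν
          = ENNReal.ofReal (∫ e, S (xs n - min e.1 e.2) / S (xs n) ∂ν) :=
        (ofReal_integral_eq_lintegral_ofReal hint
          (ae_of_all _ fun e => div_nonneg (hSpos _).le (hSpos _).le)).symm
      rw [heq1]
      exact ENNReal.ofReal_le_ofReal ((hr_lb (xs n)).trans (hxs2 n).le)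
    have hliminf_le : liminf (fun n =>
        ∫⁻ e, ENNReal.ofReal (S (xs n - min e.1 e.2) / S (xs n)) ∂ν) atTop
        ≤ ENNReal.ofReal b := by
      refine le_trans (liminf_le_liminf (Eventually.of_forall hterm)) ?_
      simp [liminf_const]
    have hcontra : ENNReal.ofReal Amin ≤ ENNReal.ofReal b := by
      rw [hAmin_lint]
      exact hstep1.trans hliminf_le
    rw [ENNReal.ofReal_le_ofReal_iff hb0.le] at hcontra
    linarith
  -- assembly
  have hgoal_eq : (fun x => (μ {ω | X₁ ω + ε₁ ω > x ∧ X₂ ω + ε₂ ω > x}).toReal /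
      (μ {ω | X₁ ω > x ∧ X₂ ω > x}).toReal)
      = fun x => (μ {ω | X₁ ω + ε₁ ω > x ∧ X₂ ω + ε₂ ω > x}).toReal / S x := rfl
  rw [hgoal_eq, hAmin_eq, hAmax_eq]
  set r : ℝ → ℝ := fun x => (μ {ω | X₁ ω + ε₁ ω > x ∧ X₂ ω + ε₂ ω > x}).toReal / S x
    with hr_def
  have hbdd_above : IsBoundedUnder (· ≤ ·) atTop r :=
    ⟨Amax + 1, eventually_map.mpr (hkey_ub (Amax + 1) (lt_add_one _))⟩
  have hbdd_below : IsBoundedUnder (· ≥ ·) atTop r :=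
    ⟨0, eventually_map.mpr (Eventually.of_forall hr_nonneg)⟩
  have hcob_ge : IsCoboundedUnder (· ≥ ·) atTop r := hbdd_above.isCoboundedUnder_ge
  have hcob_le : IsCoboundedUnder (· ≤ ·) atTop r := hbdd_below.isCoboundedUnder_le
  refine ⟨?_, liminf_le_limsup hbdd_above hbdd_below, ?_⟩
  · by_contra hlt
    push_neg at hlt
    have hb1 : (liminf r atTop + Amin) / 2 < Amin := by linarith
    have hb2 := le_liminf_of_le hcob_ge (hkey_lb _ hb1)
    linarith
  · by_contra hlt
    push_neg at hlt
    have hb1 : Amax < (Amax + limsup r atTop) / 2 := by linarith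
    have hb2 := limsup_le_of_le hcob_le (hkey_ub _ hb1)
    linarith
end

section
/- Let θ₁, θ₂ > 0 and α₁ ∈ (1,2). For every x > 0 there exists a unique q₁ = q₁(x) ∈ (0,x) satisfying θ₁α₁ q₁^{α₁−1} = 2θ₂(x − q₁); set q₂(x) = x − q₁(x). Then as x → ∞: q₂(x) / x^{α₁−1} → α₁θ₁/(2θ₂), q₁(x)/x → 1, and (θ₁ q₁(x)^{α₁} + θ₂ q₂(x)²) / x^{α₁} → θ₁. (Asymptotic solution of the exponent-balancing system in Proposition 1, part 3a.) -/
open Filter Real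

/-! The balance equation says that `q₂ = x - q₁` equals `c q₁^{α₁-1}` with `c = α₁θ₁/(2θ₂)`.
Since `q₁ ≤ x`, this gives `0 ≤ q₂/x ≤ c x^{α₁-2} → 0`, so `q₁/x → 1`; then
`q₂/x^{α₁-1} = c (q₁/x)^{α₁-1} → c`, and `q₂²/x^{α₁} = (q₂/x^{α₁-1})² x^{α₁-2} → 0`, so the
quadratic part of `ψ₊(x)` is negligible against `θ₁ q₁^{α₁} ~ θ₁ x^{α₁}`. Uniqueness holds because
`q ↦ θ₁α₁ q^{α₁-1} + 2θ₂ q` is strictly increasing. -/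

lemma strictMonoOn_mul_rpow_add_mul {a b p : ℝ} (ha : 0 ≤ a) (hb : 0 < b) (hp : 0 ≤ p) :
    StrictMonoOn (fun q => a * q ^ p + b * q) (Set.Ici 0) :=
  MonotoneOn.add_strictMono
    (fun _ hx _ hy hxy => mul_le_mul_of_nonneg_left
      (monotoneOn_rpow_Ici_of_exponent_nonneg hp hx hy hxy) ha)
    ((strictMono_mul_left_of_pos hb).strictMonoOn _)

lemma eq_of_mul_rpow_eq_mul_sub {a b p x q q' : ℝ} (ha : 0 ≤ a) (hb : 0 < b) (hp : 0 ≤ p)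
    (hq : 0 ≤ q) (hq' : 0 ≤ q') (h : a * q ^ p = b * (x - q)) (h' : a * q' ^ p = b * (x - q')) :
    q = q' :=
  (strictMonoOn_mul_rpow_add_mul ha hb hp).injOn hq hq' (by linear_combination h - h')

lemma tendsto_rpow_atTop_nhds_zero_of_lt_zero {s : ℝ} (hs : s < 0) :
    Tendsto (fun x : ℝ => x ^ s) atTop (nhds 0) := by
  simpa using tendsto_rpow_neg_atTop (y := -s) (by linarith)

section Balance

variable {α c : ℝ} {q : ℝ → ℝ}

lemma sub_div_rpow_sub_one_eq {x y : ℝ} (hx : 0 < x) (hy : 0 ≤ y) (h : x - y = c * y ^ (α - 1)) :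
    (x - y) / x ^ (α - 1) = c * (y / x) ^ (α - 1) := by
  rw [h, div_rpow hy hx.le, mul_div_assoc]

lemma sub_div_le_mul_rpow_sub_two {x y : ℝ} (hα : 1 ≤ α) (hc : 0 ≤ c) (hx : 0 < x)
    (hy : 0 ≤ y) (h : x - y = c * y ^ (α - 1)) : (x - y) / x ≤ c * x ^ (α - 2) := by
  have hyx : y ≤ x := by
    have : 0 ≤ c * y ^ (α - 1) := mul_nonneg hc (rpow_nonneg hy _)
    linarith
  have hle : x - y ≤ c * x ^ (α - 1) := h ▸
    mul_le_mul_of_nonneg_left (rpow_le_rpow hy hyx (by linarith)) hc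
  have hsplit : x ^ (α - 1) = x ^ (α - 2) * x := by
    rw [← rpow_add_one hx.ne']; ring_nf
  rw [div_le_iff₀ hx, mul_assoc, ← hsplit]
  exact hle

variable (hα₁ : 1 ≤ α) (hα₂ : α < 2) (hc : 0 ≤ c)
  (hq : ∀ᶠ x in atTop, 0 ≤ q x ∧ x - q x = c * q x ^ (α - 1))
include hα₁ hα₂ hc hq

lemma tendsto_div_self_of_sub_eq_mul_rpow : Tendsto (fun x => q x / x) atTop (nhds 1) := by
  have hbound : Tendsto (fun x : ℝ => c * x ^ (α - 2)) atTop (nhds 0) := by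
    simpa using (tendsto_rpow_atTop_nhds_zero_of_lt_zero (by linarith : α - 2 < 0)).const_mul c
  have hsmall : Tendsto (fun x => (x - q x) / x) atTop (nhds 0) := by
    refine tendsto_of_tendsto_of_tendsto_of_le_of_le' tendsto_const_nhds hbound ?_ ?_
    all_goals filter_upwards [eventually_gt_atTop 0, hq] with x hx ⟨hqx, hbal⟩
    · rw [hbal]; exact div_nonneg (mul_nonneg hc (rpow_nonneg hqx _)) hx.le
    · exact sub_div_le_mul_rpow_sub_two hα₁ hc hx hqx hbal
  have hlim : Tendsto (fun x => 1 - (x - q x) / x) atTop (nhds 1) := by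
    simpa using (tendsto_const_nhds (x := (1 : ℝ))).sub hsmall
  refine hlim.congr' ?_
  filter_upwards [eventually_gt_atTop 0] with x hx
  field_simp
  ring

lemma tendsto_sub_div_rpow_sub_one_of_sub_eq_mul_rpow :
    Tendsto (fun x => (x - q x) / x ^ (α - 1)) atTop (nhds c) := by
  have hlim : Tendsto (fun x => c * (q x / x) ^ (α - 1)) atTop (nhds c) := by
    simpa using ((tendsto_div_self_of_sub_eq_mul_rpow hα₁ hα₂ hc hq).rpow_const
      (Or.inl one_ne_zero)).const_mul c
  refine hlim.congr' ?_
  filter_upwards [eventually_gt_atTop 0, hq] with x hx ⟨hqx, hbal⟩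
  exact (sub_div_rpow_sub_one_eq hx hqx hbal).symm

lemma tendsto_sq_sub_div_rpow_of_sub_eq_mul_rpow :
    Tendsto (fun x => (x - q x) ^ 2 / x ^ α) atTop (nhds 0) := by
  have hlim : Tendsto (fun x => ((x - q x) / x ^ (α - 1)) ^ 2 * x ^ (α - 2)) atTop (nhds 0) := by
    simpa using ((tendsto_sub_div_rpow_sub_one_of_sub_eq_mul_rpow hα₁ hα₂ hc hq).pow 2).mul
      (tendsto_rpow_atTop_nhds_zero_of_lt_zero (by linarith : α - 2 < 0))
  refine hlim.congr' ?_
  filter_upwards [eventually_gt_atTop 0] with x hx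
  have hsplit : x ^ α * x ^ (α - 2) = (x ^ (α - 1)) ^ 2 := by
    rw [← rpow_add hx, ← rpow_natCast, ← rpow_mul hx.le]; ring_nf
  rw [div_pow, div_mul_eq_mul_div, ← hsplit, mul_div_mul_right _ _ (rpow_pos_of_pos hx _).ne']

lemma tendsto_mul_rpow_add_mul_sq_div_rpow_of_sub_eq_mul_rpow (θ₁ θ₂ : ℝ) :
    Tendsto (fun x => (θ₁ * q x ^ α + θ₂ * (x - q x) ^ 2) / x ^ α) atTop (nhds θ₁) := by
  have hlim : Tendsto (fun x => θ₁ * (q x / x) ^ α + θ₂ * ((x - q x) ^ 2 / x ^ α)) atTop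
      (nhds θ₁) := by
    simpa using (((tendsto_div_self_of_sub_eq_mul_rpow hα₁ hα₂ hc hq).rpow_const
      (Or.inl one_ne_zero)).const_mul θ₁).add
      ((tendsto_sq_sub_div_rpow_of_sub_eq_mul_rpow hα₁ hα₂ hc hq).const_mul θ₂)
  refine hlim.congr' ?_
  filter_upwards [eventually_gt_atTop 0, hq] with x hx ⟨hqx, _⟩
  rw [div_rpow hqx hx.le, add_div]
  ring

end Balance

/-- Asymptotic solution of the exponent-balancing system in Proposition 1, part 3a:
for `θ₁, θ₂ > 0` and `α₁ ∈ (1,2)`, the system `q₁ + q₂ = x`,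
`θ₁ α₁ q₁^{α₁-1} = 2 θ₂ q₂` has a unique solution with `q₁ ∈ (0,x)`, and as `x → ∞`,
`q₂(x)/x^{α₁-1} → α₁θ₁/(2θ₂)`, `q₁(x)/x → 1`, and
`(θ₁ q₁(x)^{α₁} + θ₂ q₂(x)²)/x^{α₁} → θ₁`. -/
theorem stmt14
    (θ₁ θ₂ α₁ : ℝ) (hθ₁ : 0 < θ₁) (hθ₂ : 0 < θ₂) (hα₁ : 1 < α₁) (hα₂ : α₁ < 2)
    (q₁ : ℝ → ℝ)
    (hq : ∀ x : ℝ, 0 < x → q₁ x ∈ Set.Ioo 0 x ∧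
        θ₁ * α₁ * q₁ x ^ (α₁ - 1) = 2 * θ₂ * (x - q₁ x)) :
    (∀ x : ℝ, 0 < x → ∃! q : ℝ, q ∈ Set.Ioo 0 x ∧
        θ₁ * α₁ * q ^ (α₁ - 1) = 2 * θ₂ * (x - q)) ∧
      Tendsto (fun x => (x - q₁ x) / x ^ (α₁ - 1)) atTop
        (nhds (α₁ * θ₁ / (2 * θ₂))) ∧
      Tendsto (fun x => q₁ x / x) atTop (nhds 1) ∧
      Tendsto (fun x =>
          (θ₁ * q₁ x ^ α₁ + θ₂ * (x - q₁ x) ^ 2) / x ^ α₁) atTop (nhds θ₁) := by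
  have hc : 0 ≤ α₁ * θ₁ / (2 * θ₂) := by positivity
  have hbal : ∀ᶠ x in atTop,
      0 ≤ q₁ x ∧ x - q₁ x = α₁ * θ₁ / (2 * θ₂) * q₁ x ^ (α₁ - 1) := by
    filter_upwards [eventually_gt_atTop 0] with x hx
    obtain ⟨hmem, heq⟩ := hq x hx
    refine ⟨hmem.1.le, ?_⟩
    field_simp
    linarith
  refine ⟨fun x hx => ⟨q₁ x, hq x hx, fun q ⟨hmem, heq⟩ => ?_⟩,
    tendsto_sub_div_rpow_sub_one_of_sub_eq_mul_rpow hα₁.le hα₂ hc hbal,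
    tendsto_div_self_of_sub_eq_mul_rpow hα₁.le hα₂ hc hbal,
    tendsto_mul_rpow_add_mul_sq_div_rpow_of_sub_eq_mul_rpow hα₁.le hα₂ hc hbal θ₁ θ₂⟩
  exact eq_of_mul_rpow_eq_mul_sub (by positivity) (by positivity) (by linarith) hmem.1.le
    (hq x hx).1.1.le heq (hq x hx).2
end

section
/- Let D ≥ 1, let Σ be a symmetric positive-definite real D×D matrix, and let μ be the measure on ℝ^D with density f_Z(z) = (2π)^{−D/2}(det Σ)^{−1/2} exp(−½ zᵀΣ⁻¹z) with respect to Lebesgue measure. Let Φ be the standard normal distribution function and φ the standard normal density, fix R > 0, and define T : ℝ^D → ℝ^D by T(z)_i = R/(1 − Φ(z_i)) for each i. Then the pushforward measure T_*μ is absolutely continuous with respect to Lebesgue measure on ℝ^D, with a density h supported on (R,∞)^D satisfying, for all z ∈ ℝ^D, h(T(z)) = f_Z(z) · ∏_{i=1}^{D} (1 − Φ(z_i))² / (R·φ(z_i)). Equivalently, h(x) = (det Σ)^{−1/2} exp{−½ g⁻¹(x/R)ᵀ(Σ⁻¹ − I_D) g⁻¹(x/R)} · R^D / ∏_{i=1}^D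 x_i², where g⁻¹(y)_i = Φ⁻¹(1 − 1/y_i). (Lemma 3 of the paper: conditional density of the transformed Gaussian scale mixture given R.) -/
open MeasureTheory Matrix Real

/-- The standard normal distribution function `Φ`. -/
noncomputable def stdNormalCDF (t : ℝ) : ℝ :=
  ∫ s in Set.Iic t, (Real.sqrt (2 * π))⁻¹ * Real.exp (-s ^ 2 / 2)

/-- The standard normal density `φ`. -/
noncomputable def stdNormalPDF (s : ℝ) : ℝ := (Real.sqrt (2 * π))⁻¹ * Real.exp (-s ^ 2 / 2)

/-!
Each coordinate of `T` is the same strictly increasing map `t(s) = R / (1 - Φ(s))` from `ℝ` into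
`(R, ∞)`, with derivative `t'(s) = R φ(s) / (1 - Φ(s))²`. Hence `T` is injective with diagonal
Jacobian of determinant `∏ᵢ t'(zᵢ) > 0`, and the change of variables formula shows that
`T_*μ` has density `f_Z(z) / ∏ᵢ t'(zᵢ)` at `T(z)`, and density `0` off the range of `T`.
-/

theorem gaussianPDFReal_zero_one : ProbabilityTheory.gaussianPDFReal 0 1 = stdNormalPDF := by
  ext s
  simp [ProbabilityTheory.gaussianPDFReal, stdNormalPDF]

theorem stdNormalPDF_pos (s : ℝ) : 0 < stdNormalPDF s := by
  unfold stdNormalPDF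
  positivity

theorem continuous_stdNormalPDF : Continuous stdNormalPDF := by
  unfold stdNormalPDF
  fun_prop

theorem integrable_stdNormalPDF : Integrable stdNormalPDF :=
  gaussianPDFReal_zero_one ▸ ProbabilityTheory.integrable_gaussianPDFReal 0 1

theorem setIntegral_stdNormalPDF_pos {s : Set ℝ} (hs : volume s ≠ 0) :
    0 < ∫ x in s, stdNormalPDF x := by
  rw [setIntegral_pos_iff_support_of_nonneg_ae
    (Filter.Eventually.of_forall fun x => (stdNormalPDF_pos x).le)
    integrable_stdNormalPDF.integrableOn]
  have hsupp : Function.support stdNormalPDF = Set.univ :=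
    Set.eq_univ_of_forall fun x => (stdNormalPDF_pos x).ne'
  rwa [hsupp, Set.univ_inter, pos_iff_ne_zero]

theorem stdNormalCDF_eq_setIntegral (t : ℝ) :
    stdNormalCDF t = ∫ s in Set.Iic t, stdNormalPDF s := rfl

theorem stdNormalCDF_pos (t : ℝ) : 0 < stdNormalCDF t :=
  setIntegral_stdNormalPDF_pos (by simp)

theorem stdNormalCDF_add_setIntegral_Ioi (t : ℝ) :
    stdNormalCDF t + ∫ s in Set.Ioi t, stdNormalPDF s = 1 := by
  rw [stdNormalCDF_eq_setIntegral, ← setIntegral_union (Set.Iic_disjoint_Ioi le_rfl)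
    measurableSet_Ioi integrable_stdNormalPDF.integrableOn integrable_stdNormalPDF.integrableOn,
    Set.Iic_union_Ioi, setIntegral_univ, ← gaussianPDFReal_zero_one,
    ProbabilityTheory.integral_gaussianPDFReal_eq_one 0 one_ne_zero]

theorem stdNormalCDF_lt_one (t : ℝ) : stdNormalCDF t < 1 := by
  linarith [stdNormalCDF_add_setIntegral_Ioi t, setIntegral_stdNormalPDF_pos (s := Set.Ioi t)
    (by simp)]

theorem stdNormalCDF_add_setIntegral_Ioc {a b : ℝ} (hab : a ≤ b) :
    stdNormalCDF a + ∫ s in Set.Ioc a b, stdNormalPDF s = stdNormalCDF b := by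
  rw [stdNormalCDF_eq_setIntegral, stdNormalCDF_eq_setIntegral, ← Set.Iic_union_Ioc_eq_Iic hab,
    setIntegral_union (Set.Iic_disjoint_Ioc le_rfl) measurableSet_Ioc
      integrable_stdNormalPDF.integrableOn integrable_stdNormalPDF.integrableOn]

theorem stdNormalCDF_strictMono : StrictMono stdNormalCDF := fun a b hab => by
  rw [← stdNormalCDF_add_setIntegral_Ioc hab.le, lt_add_iff_pos_right]
  exact setIntegral_stdNormalPDF_pos (by simp [hab])

theorem hasDerivAt_stdNormalCDF (t : ℝ) : HasDerivAt stdNormalCDF (stdNormalPDF t) t := by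
  have hFTC : HasDerivAt (fun u => stdNormalCDF (t - 1) + ∫ s in (t - 1)..u, stdNormalPDF s)
      (stdNormalPDF t) t :=
    (intervalIntegral.integral_hasDerivAt_right integrable_stdNormalPDF.intervalIntegrable
      continuous_stdNormalPDF.stronglyMeasurable.stronglyMeasurableAtFilter
      continuous_stdNormalPDF.continuousAt).const_add _
  refine hFTC.congr_of_eventuallyEq ?_
  filter_upwards [eventually_gt_nhds (sub_one_lt t)] with u hu
  rw [intervalIntegral.integral_of_le hu.le, stdNormalCDF_add_setIntegral_Ioc hu.le]

theorem continuous_stdNormalCDF : Continuous stdNormalCDF :=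
  continuous_iff_continuousAt.2 fun t => (hasDerivAt_stdNormalCDF t).continuousAt

theorem one_sub_stdNormalCDF_pos (t : ℝ) : 0 < 1 - stdNormalCDF t :=
  sub_pos.2 (stdNormalCDF_lt_one t)

section TailScale

variable {R : ℝ}

theorem lt_div_one_sub_stdNormalCDF (hR : 0 < R) (t : ℝ) : R < R / (1 - stdNormalCDF t) :=
  (lt_div_iff₀ (one_sub_stdNormalCDF_pos t)).2
    (mul_lt_of_lt_one_right hR (sub_lt_self 1 (stdNormalCDF_pos t)))

theorem strictMono_div_one_sub_stdNormalCDF (hR : 0 < R) :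
    StrictMono fun t => R / (1 - stdNormalCDF t) := fun _ b hab =>
  div_lt_div_of_pos_left hR (one_sub_stdNormalCDF_pos b)
    (sub_lt_sub_left (stdNormalCDF_strictMono hab) 1)

theorem hasDerivAt_div_one_sub_stdNormalCDF (R t : ℝ) :
    HasDerivAt (fun t => R / (1 - stdNormalCDF t))
      (R * stdNormalPDF t / (1 - stdNormalCDF t) ^ 2) t :=
  ((hasDerivAt_const t R).div ((hasDerivAt_stdNormalCDF t).const_sub 1)
    (one_sub_stdNormalCDF_pos t).ne').congr_deriv (by ring)

end TailScale

section Componentwise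

variable {ι : Type*} [Fintype ι]

theorem hasFDerivAt_comp_apply {t t' : ℝ → ℝ} (ht : ∀ s, HasDerivAt t (t' s) s) (z : ι → ℝ) :
    HasFDerivAt (fun z i => t (z i))
      (ContinuousLinearMap.pi fun i =>
        t' (z i) • ContinuousLinearMap.proj (R := ℝ) (φ := fun _ : ι => ℝ) i) z :=
  hasFDerivAt_pi.2 fun i => (ht (z i)).comp_hasFDerivAt z (hasFDerivAt_apply i z)

theorem det_pi_smul_proj (c : ι → ℝ) :
    (ContinuousLinearMap.pi fun i =>
      c i • ContinuousLinearMap.proj (R := ℝ) (φ := fun _ : ι => ℝ) i).det = ∏ i, c i := by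
  have h := LinearMap.det_pi (R := ℝ) (M := ℝ) fun i => c i • LinearMap.id
  simp only [LinearMap.det_smul, LinearMap.det_id, Module.finrank_self, pow_one, mul_one] at h
  rw [ContinuousLinearMap.det, ← h]
  rfl

end Componentwise

section ChangeOfVariables

variable {E : Type*} [NormedAddCommGroup E] [NormedSpace ℝ E] [FiniteDimensional ℝ E]
  [MeasurableSpace E] [BorelSpace E] {T : E → E} {T' : E → E →L[ℝ] E}

theorem measurableEmbedding_of_hasFDerivAt (hT : ∀ x, HasFDerivAt T (T' x) x)
    (hinj : Function.Injective T) : MeasurableEmbedding T :=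
  ⟨hinj, (continuous_iff_continuousAt.2 fun x => (hT x).continuousAt).measurable,
    fun _ hs => measurable_image_of_fderivWithin hs (fun x _ => (hT x).hasFDerivWithinAt)
      hinj.injOn⟩

theorem map_withDensity_ofReal_of_hasFDerivAt (μ : Measure E) [μ.IsAddHaarMeasure]
    (hT : ∀ x, HasFDerivAt T (T' x) x) (hinj : Function.Injective T) {f g : E → ℝ}
    (hgT : ∀ x, |(T' x).det| * g (T x) = f x) (hg : ∀ y ∉ Set.range T, g y = 0) :
    (μ.withDensity fun x => ENNReal.ofReal (f x)).map T =
      μ.withDensity fun y => ENNReal.ofReal (g y) := by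
  have hemb := measurableEmbedding_of_hasFDerivAt hT hinj
  ext A hA
  have hsupp : (Function.support fun y => ENNReal.ofReal (g y)) ⊆ Set.range T :=
    Function.support_subset_iff'.2 fun y hy => by simp [hg y hy]
  rw [Measure.map_apply hemb.measurable hA, withDensity_apply _ (hemb.measurable hA),
    withDensity_apply _ hA, ← setLIntegral_eq_of_support_subset (μ := μ.restrict A) hsupp,
    Measure.restrict_restrict hemb.measurableSet_range, ← Set.image_preimage_eq_range_inter,
    lintegral_image_eq_lintegral_abs_det_fderiv_mul μ (hemb.measurable hA)
      (fun x _ => (hT x).hasFDerivWithinAt) hinj.injOn]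
  refine lintegral_congr fun x => ?_
  rw [← ENNReal.ofReal_mul (abs_nonneg _), hgT]

end ChangeOfVariables

theorem stmt18_general
    (D : ℕ)
    (Sig : Matrix (Fin D) (Fin D) ℝ)
    (R : ℝ) (hR : 0 < R)
    (fZ : (Fin D → ℝ) → ℝ)
    (hfZ : ∀ z : Fin D → ℝ, fZ z =
      (2 * π) ^ (-(D : ℝ) / 2) * Sig.det ^ (-(1 : ℝ) / 2) *
        Real.exp (-(1 / 2) * (z ⬝ᵥ Sig⁻¹ *ᵥ z)))
    (μ : Measure (Fin D → ℝ))
    (hμ : μ = (volume : Measure (Fin D → ℝ)).withDensity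
        (fun z => ENNReal.ofReal (fZ z)))
    (T : (Fin D → ℝ) → (Fin D → ℝ))
    (hT : ∀ z : Fin D → ℝ, ∀ i : Fin D, T z i = R / (1 - stdNormalCDF (z i))) :
    ∃ h : (Fin D → ℝ) → ℝ, Measurable h ∧
      Measure.map T μ = (volume : Measure (Fin D → ℝ)).withDensity
        (fun x => ENNReal.ofReal (h x)) ∧
      (∀ x : Fin D → ℝ, (∃ i : Fin D, x i ≤ R) → h x = 0) ∧
      (∀ z : Fin D → ℝ, h (T z) =
        fZ z * ∏ i : Fin D, (1 - stdNormalCDF (z i)) ^ 2 / (R * stdNormalPDF (z i))) := by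
  have hT_eq : T = fun z i => R / (1 - stdNormalCDF (z i)) := funext fun z => funext (hT z)
  have hderiv := hT_eq ▸ hasFDerivAt_comp_apply (hasDerivAt_div_one_sub_stdNormalCDF R)
  have hinj : Function.Injective T :=
    hT_eq ▸ (strictMono_div_one_sub_stdNormalCDF hR).injective.comp_left
  set F : (Fin D → ℝ) → ℝ :=
    fun z => fZ z * ∏ i, (1 - stdNormalCDF (z i)) ^ 2 / (R * stdNormalPDF (z i))
  have hF : Measurable F := by
    have hfZ_meas : Measurable fZ := by
      rw [show fZ = _ from funext hfZ]
      fun_prop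
    have := continuous_stdNormalCDF.measurable
    have := continuous_stdNormalPDF.measurable
    fun_prop
  have hT_range : ∀ y ∉ Set.range T, Function.extend T F 0 y = 0 :=
    fun _ hy => Function.extend_apply' _ _ _ hy
  refine ⟨Function.extend T F 0,
    (measurableEmbedding_of_hasFDerivAt hderiv hinj).measurable_extend hF measurable_const,
    hμ ▸ map_withDensity_ofReal_of_hasFDerivAt volume hderiv hinj (fun z => ?_) hT_range,
    fun x ⟨i, hxi⟩ => hT_range x ?_, hinj.extend_apply F 0⟩
  · have hdet_pos : 0 < ∏ i, R * stdNormalPDF (z i) / (1 - stdNormalCDF (z i)) ^ 2 :=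
      Finset.prod_pos fun i _ =>
        div_pos (mul_pos hR (stdNormalPDF_pos _)) (pow_pos (one_sub_stdNormalCDF_pos _) 2)
    rw [hinj.extend_apply, det_pi_smul_proj, abs_of_pos hdet_pos]
    simp only [F, ← inv_div (R * _), Finset.prod_inv_distrib]
    rw [mul_left_comm, mul_inv_cancel₀ hdet_pos.ne', mul_one]
  · rintro ⟨z, rfl⟩
    exact hxi.not_gt (hT z i ▸ lt_div_one_sub_stdNormalCDF hR (z i))

/-- Lemma 3 of the paper: the conditional density of the transformed Gaussian scale
mixture given `R`. If `μ` has the centered Gaussian density `f_Z` with covariance `Σ`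
on `ℝ^D` and `T(z)ᵢ = R/(1 - Φ(zᵢ))`, then the pushforward `T_*μ` has a Lebesgue
density `h`, vanishing off `(R,∞)^D`, with
`h(T(z)) = f_Z(z) ∏ᵢ (1 - Φ(zᵢ))² / (R φ(zᵢ))` for all `z`. -/
theorem stmt18
    (D : ℕ) (hD : 1 ≤ D)
    (Sig : Matrix (Fin D) (Fin D) ℝ) (hSymm : Sig.IsSymm) (hPD : Sig.PosDef)
    (R : ℝ) (hR : 0 < R)
    (fZ : (Fin D → ℝ) → ℝ)
    (hfZ : ∀ z : Fin D → ℝ, fZ z =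
      (2 * π) ^ (-(D : ℝ) / 2) * Sig.det ^ (-(1 : ℝ) / 2) *
        Real.exp (-(1 / 2) * (z ⬝ᵥ Sig⁻¹ *ᵥ z)))
    (μ : Measure (Fin D → ℝ))
    (hμ : μ = (volume : Measure (Fin D → ℝ)).withDensity
        (fun z => ENNReal.ofReal (fZ z)))
    (T : (Fin D → ℝ) → (Fin D → ℝ))
    (hT : ∀ z : Fin D → ℝ, ∀ i : Fin D, T z i = R / (1 - stdNormalCDF (z i))) :
    ∃ h : (Fin D → ℝ) → ℝ, Measurable h ∧
      Measure.map T μ = (volume : Measure (Fin D → ℝ)).withDensity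
        (fun x => ENNReal.ofReal (h x)) ∧
      (∀ x : Fin D → ℝ, (∃ i : Fin D, x i ≤ R) → h x = 0) ∧
      (∀ z : Fin D → ℝ, h (T z) =
        fZ z * ∏ i : Fin D, (1 - stdNormalCDF (z i)) ^ 2 / (R * stdNormalPDF (z i))) :=
  stmt18_general D Sig R hR fZ hfZ μ hμ T hT
end
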